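/- arXiv:1709.04793 — 9 statements merged into one kernel-verified Lean document; each statement's English description precedes it below -/
import Mathlib

section
/- Let μ be a nilpotent Lie bracket on 𝔫 = ℂ^n, and let 𝔥 be an ideal of codimension 2 containing [𝔫,𝔫], with 𝔫 = ⟨x₀,x₁⟩ ⊕ 𝔥. If D is a derivation of 𝔥 commuting with ad(x₀) restricted to 𝔥, then the alternating bilinear map φ_D defined by φ_D(x₀,x₁)=0, φ_D(x₀,h)=0, φ_D(x₁,h)=D(h), φ_D(h,h')=0 for h,h'∈𝔥 satisfies the Jacobi identity and is a 2-cocycle for μ; hence μ_t = μ + tφ_D is a Lie bracket for every t ∈ ℂ. -/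
open scoped BigOperators

noncomputable section

/-- The underlying vector space `ℂ^n`. -/
abbrev V (n : ℕ) := Fin n → ℂ

/-- Bilinear maps on `ℂ^n`. -/
abbrev Bil (n : ℕ) := V n →ₗ[ℂ] V n →ₗ[ℂ] V n

/-- The trilinear map `(ψ∘φ)(X,Y,Z) = ψ(φ(X,Y),Z) + ψ(φ(Y,Z),X) + ψ(φ(Z,X),Y)`. -/
def circ {n : ℕ} (ψ φ : Bil n) (X Y Z : V n) : V n :=
  ψ (φ X Y) Z + ψ (φ Y Z) X + ψ (φ Z X) Y

/-- `μ` is alternating. -/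
def IsAlt {n : ℕ} (μ : Bil n) : Prop := ∀ X, μ X X = 0

/-- The Jacobi identity in the form `μ∘μ = 0`. -/
def JacobiId {n : ℕ} (μ : Bil n) : Prop := ∀ X Y Z, circ μ μ X Y Z = 0

/-- `φ` is a 2-cocycle for `μ` : `μ∘φ + φ∘μ = 0`. -/
def IsCocycle {n : ℕ} (μ φ : Bil n) : Prop :=
  ∀ X Y Z, circ μ φ X Y Z + circ φ μ X Y Z = 0

/-- The basis vector `x_i` of `ℂ^n` (zero when out of range). -/
def e (n i : ℕ) : V n := if h : i < n then Pi.single ⟨i, h⟩ 1 else 0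

/-- The `k`-th coordinate of a vector (zero when out of range). -/
def coord {n : ℕ} (k : ℕ) (v : V n) : ℂ := if h : k < n then v ⟨k, h⟩ else 0

/-- The lower central series of a bracket. -/
def lcs {n : ℕ} (μ : Bil n) : ℕ → Submodule ℂ (V n)
  | 0 => ⊤
  | k + 1 => Submodule.span ℂ {z | ∃ x y, y ∈ lcs μ k ∧ μ x y = z}

/-- The value `ψ_{r,s}(x_i, x_j)` of Vergne's cocycle on basis vectors, for `i < j`. -/
def psiCoef (n r s i j : ℕ) : V n :=
  if 1 ≤ i ∧ i ≤ r ∧ r < j ∧ j ≤ n - 1 ∧ i + j + s - 2 * r - 1 ≤ n - 1 then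
    ((-1 : ℂ) ^ (r - i) * (Nat.choose (j - r - 1) (r - i) : ℂ)) • e n (i + j + s - 2 * r - 1)
  else 0

/-- The index set `Δ_n` (as a finset of pairs `(r,s)`). -/
def Delta (n : ℕ) : Finset (ℕ × ℕ) :=
  (Finset.range n ×ˢ Finset.range n).filter
    (fun p => (1 ≤ p.1 ∧ 2 * p.1 + 1 < p.2 ∧ p.2 ≤ n - 1) ∨
      (Even n ∧ 2 * p.1 = n - 2 ∧ p.2 = n - 1))

/-- `μ` is a filiform bracket written in adapted-basis form `μ = μ₀ + Σ a_{r,s} ψ_{r,s}`. -/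
def AdaptedForm (n : ℕ) (μ : Bil n) (a : ℕ → ℕ → ℂ) : Prop :=
  IsAlt μ ∧ JacobiId μ ∧
  (∀ j, 1 ≤ j → j ≤ n - 2 → μ (e n 0) (e n j) = e n (j + 1)) ∧
  μ (e n 0) (e n (n - 1)) = 0 ∧
  (∀ i j, 1 ≤ i → i < j → j ≤ n - 1 →
    μ (e n i) (e n j) = ∑ p ∈ Delta n, a p.1 p.2 • psiCoef n p.1 p.2 i j)

/-- The commutator ideal `𝔥 = span{x₂,…,x_{n-1}}`. -/
def Hspan (n : ℕ) : Submodule ℂ (V n) :=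
  Submodule.span ℂ {v : V n | ∃ k, 2 ≤ k ∧ k < n ∧ v = e n k}

/-- the construction of Proposition 1: `φ_D` is a Lie bracket and a 2-cocycle
for the nilpotent bracket `μ`, so `μ_t = μ + tφ_D` is a Lie bracket for all `t`. -/
theorem phiD_jacobi_and_cocycle (n : ℕ) (μ : Bil n)
    (hμalt : IsAlt μ) (hμjac : JacobiId μ)
    (hnilp : ∃ k, lcs μ k = ⊥)
    (x₀ x₁ : V n) (H : Submodule ℂ (V n))
    (hindep : LinearIndependent ℂ ![x₀, x₁])
    (hcompl : IsCompl (Submodule.span ℂ {x₀, x₁}) H)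
    (hcomm : ∀ X Y : V n, μ X Y ∈ H)
    (hideal : ∀ X : V n, ∀ h ∈ H, μ X h ∈ H)
    (D : V n →ₗ[ℂ] V n)
    (hDH : ∀ h ∈ H, D h ∈ H)
    (hder : ∀ h ∈ H, ∀ h' ∈ H, D (μ h h') = μ (D h) h' + μ h (D h'))
    (hDad : ∀ h ∈ H, D (μ x₀ h) = μ x₀ (D h))
    (φ : Bil n) (hφalt : IsAlt φ)
    (hφ01 : φ x₀ x₁ = 0)
    (hφ0h : ∀ h ∈ H, φ x₀ h = 0)
    (hφ1h : ∀ h ∈ H, φ x₁ h = D h)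
    (hφhh : ∀ h ∈ H, ∀ h' ∈ H, φ h h' = 0) :
    JacobiId φ ∧ IsCocycle μ φ ∧ ∀ t : ℂ, JacobiId (μ + t • φ) := by
  -- antisymmetry of alternating bilinear maps
  have anti : ∀ (ψ : Bil n), IsAlt ψ → ∀ X Y, ψ Y X = -ψ X Y := by
    intro ψ hψ X Y
    have h2 := hψ (X + Y)
    simp only [map_add, LinearMap.add_apply, hψ X, hψ Y, zero_add, add_zero] at h2
    exact add_eq_zero_iff_eq_neg.mp h2
  have φanti := anti φ hφalt
  have μanti := anti μ hμalt
  -- decomposition of an arbitrary vector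
  have decomp : ∀ X : V n, ∃ a b : ℂ, ∃ h ∈ H, X = a • x₀ + b • x₁ + h := by
    intro X
    have hX : X ∈ Submodule.span ℂ {x₀, x₁} ⊔ H := by
      rw [hcompl.codisjoint.eq_top]; trivial
    obtain ⟨y, hy, z, hz, rfl⟩ := Submodule.mem_sup.mp hX
    obtain ⟨c, d, rfl⟩ := Submodule.mem_span_pair.mp hy
    exact ⟨c, d, z, hz, rfl⟩
  -- basic values of φ and μ, phrased as (conditional) rewrite lemmas
  have φ10 : φ x₁ x₀ = 0 := by rw [φanti, hφ01, neg_zero]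
  have φh0 : ∀ h ∈ H, φ h x₀ = 0 := by
    intro h hh; rw [φanti, hφ0h h hh, neg_zero]
  have φh1 : ∀ h ∈ H, φ h x₁ = -D h := by
    intro h hh; rw [φanti, hφ1h h hh]
  have μh0 : ∀ h ∈ H, μ h x₀ = -μ x₀ h := fun h _ => μanti x₀ h
  have μh1 : ∀ h ∈ H, μ h x₁ = -μ x₁ h := fun h _ => μanti x₁ h
  have μ10 : μ x₁ x₀ = -μ x₀ x₁ := μanti x₀ x₁
  have φ00 : φ x₀ x₀ = 0 := hφalt x₀
  have φ11 : φ x₁ x₁ = 0 := hφalt x₁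
  have μ00 : μ x₀ x₀ = 0 := hμalt x₀
  have μ11 : μ x₁ x₁ = 0 := hμalt x₁
  -- Jacobi identity for φ
  have jacφ : JacobiId φ := by
    intro X Y Z
    obtain ⟨a1, b1, h1, hh1, rfl⟩ := decomp X
    obtain ⟨a2, b2, h2, hh2, rfl⟩ := decomp Y
    obtain ⟨a3, b3, h3, hh3, rfl⟩ := decomp Z
    unfold circ
    simp only [map_add, map_smul, map_neg, map_zero, LinearMap.add_apply,
      LinearMap.smul_apply, LinearMap.neg_apply, LinearMap.zero_apply,
      φ00, φ11, hφ01, φ10, hφ0h, hφ1h, hφhh, φh0, φh1, hh1, hh2, hh3, hDH,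
      smul_zero, zero_add, add_zero, neg_zero, smul_neg, smul_add, smul_smul]
    module
  -- cocycle identity
  have coc : IsCocycle μ φ := by
    intro X Y Z
    obtain ⟨a1, b1, h1, hh1, rfl⟩ := decomp X
    obtain ⟨a2, b2, h2, hh2, rfl⟩ := decomp Y
    obtain ⟨a3, b3, h3, hh3, rfl⟩ := decomp Z
    have e12 : μ h1 (D h2) = -μ (D h2) h1 := μanti (D h2) h1
    have e23 : μ h2 (D h3) = -μ (D h3) h2 := μanti (D h3) h2
    have e31 : μ h3 (D h1) = -μ (D h1) h3 := μanti (D h1) h3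
    unfold circ
    simp only [map_add, map_smul, map_neg, map_zero, LinearMap.add_apply,
      LinearMap.smul_apply, LinearMap.neg_apply, LinearMap.zero_apply,
      φ00, φ11, μ00, μ11, hφ01, φ10, μ10, hφ0h, hφ1h, hφhh, φh0, φh1, μh0, μh1,
      hh1, hh2, hh3, hDH, hcomm, hder, hDad, e12, e23, e31,
      smul_zero, zero_add, add_zero, neg_zero, smul_neg, smul_add, smul_smul]
    module
  refine ⟨jacφ, coc, ?_⟩
  intro t X Y Z
  have h1 := hμjac X Y Z
  have h2 := coc X Y Z
  have h3 := jacφ X Y Z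
  unfold circ at h1 h2 h3 ⊢
  simp only [LinearMap.add_apply, LinearMap.smul_apply, map_add, map_smul]
  linear_combination (norm := module) h1 + t • h2 + (t*t) • h3
end
end

section
/- (Grunewald–O'Halloran construction) Let μ be a Lie bracket on a vector space g, 𝔥 an ideal of codimension 1, x ∉ 𝔥, and D a derivation of 𝔥. Then the alternating bilinear map φ_D defined by φ_D(x,h)=D(h) and φ_D(h,h')=0 for h,h'∈𝔥 satisfies the Jacobi identity and is a 2-cocycle for μ, so μ_t = μ + tφ_D is a Lie bracket for all t ∈ ℂ. -/
open scoped BigOperators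

noncomputable section

/-- Grunewald–O'Halloran: for an ideal `𝔥` of codimension 1, `x ∉ 𝔥` and a
derivation `D` of `𝔥`, the map `φ_D` with `φ_D(x,h)=D(h)`, `φ_D(h,h')=0` is a Lie bracket
and a 2-cocycle for `μ`, so `μ_t = μ + tφ_D` is a Lie bracket for all `t ∈ ℂ`. -/
theorem grunewald_ohalloran (n : ℕ) (μ : Bil n)
    (hμalt : IsAlt μ) (hμjac : JacobiId μ)
    (H : Submodule ℂ (V n)) (x : V n) (hx : x ∉ H)
    (hcompl : IsCompl (Submodule.span ℂ {x}) H)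
    (hideal : ∀ X : V n, ∀ h ∈ H, μ X h ∈ H)
    (D : V n →ₗ[ℂ] V n)
    (hDH : ∀ h ∈ H, D h ∈ H)
    (hder : ∀ h ∈ H, ∀ h' ∈ H, D (μ h h') = μ (D h) h' + μ h (D h'))
    (φ : Bil n) (hφalt : IsAlt φ)
    (hφxh : ∀ h ∈ H, φ x h = D h)
    (hφhh : ∀ h ∈ H, ∀ h' ∈ H, φ h h' = 0) :
    JacobiId φ ∧ IsCocycle μ φ ∧ ∀ t : ℂ, JacobiId (μ + t • φ) := by
  -- skew-symmetry from alternating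
  have skew : ∀ (B : Bil n), IsAlt B → ∀ X Y, B X Y = - B Y X := by
    intro B hB X Y
    have h2 := hB (X + Y)
    simp only [map_add, LinearMap.add_apply, hB X, hB Y] at h2
    have : B X Y + B Y X = 0 := by rw [← h2]; abel
    exact eq_neg_of_add_eq_zero_left this
  have φskew := skew φ hφalt
  have μskew := skew μ hμalt
  have hφhx : ∀ h ∈ H, φ h x = - D h := by
    intro h hh; rw [φskew, hφxh h hh]
  -- decomposition
  have decomp : ∀ X : V n, ∃ a : ℂ, ∃ p, p ∈ H ∧ X = a • x + p := by
    intro X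
    have hX : X ∈ Submodule.span ℂ {x} ⊔ H := by rw [hcompl.sup_eq_top]; trivial
    obtain ⟨u, hu, v, hv, rfl⟩ := Submodule.mem_sup.mp hX
    obtain ⟨a, rfl⟩ := Submodule.mem_span_singleton.mp hu
    exact ⟨a, v, hv, rfl⟩
  -- value of φ on a decomposed pair
  have φval : ∀ (a : ℂ) (p : V n), p ∈ H → ∀ (b : ℂ) (q : V n), q ∈ H →
      φ (a • x + p) (b • x + q) = a • D q - b • D p := by
    intro a p hp b q hq
    simp only [map_add, map_smul, LinearMap.add_apply, LinearMap.smul_apply,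
      hφalt x, hφxh q hq, hφhx p hp, hφhh p hp q hq]
    module
  -- value of φ on (element of H, decomposed vector)
  have φmH : ∀ (m : V n), m ∈ H → ∀ (c : ℂ) (r : V n), r ∈ H →
      φ m (c • x + r) = -(c • D m) := by
    intro m hm c r hr
    simp only [map_add, map_smul, hφhx m hm, hφhh m hm r hr]
    module
  -- value of μ on a decomposed pair
  have μval : ∀ (a : ℂ) (p : V n), p ∈ H → ∀ (b : ℂ) (q : V n), q ∈ H →
      μ (a • x + p) (b • x + q) = a • μ x q - b • μ x p + μ p q := by
    intro a p hp b q hq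
    simp only [map_add, map_smul, LinearMap.add_apply, LinearMap.smul_apply,
      hμalt x, μskew p x]
    module
  -- μ of a decomposed pair lies in H
  have μmem : ∀ (a : ℂ) (p : V n), p ∈ H → ∀ (b : ℂ) (q : V n), q ∈ H →
      μ (a • x + p) (b • x + q) ∈ H := by
    intro a p hp b q hq
    rw [μval a p hp b q hq]
    exact H.add_mem (H.sub_mem (H.smul_mem _ (hideal x q hq))
      (H.smul_mem _ (hideal x p hp))) (hideal p q hq)
  -- Jacobi identity for φ
  have jacφ : JacobiId φ := by
    intro X Y Z
    obtain ⟨a, p, hp, rfl⟩ := decomp X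
    obtain ⟨b, q, hq, rfl⟩ := decomp Y
    obtain ⟨c, r, hr, rfl⟩ := decomp Z
    have m1 : a • D q - b • D p ∈ H :=
      H.sub_mem (H.smul_mem _ (hDH q hq)) (H.smul_mem _ (hDH p hp))
    have m2 : b • D r - c • D q ∈ H :=
      H.sub_mem (H.smul_mem _ (hDH r hr)) (H.smul_mem _ (hDH q hq))
    have m3 : c • D p - a • D r ∈ H :=
      H.sub_mem (H.smul_mem _ (hDH p hp)) (H.smul_mem _ (hDH r hr))
    show circ φ φ _ _ _ = 0
    rw [circ, φval a p hp b q hq, φval b q hq c r hr, φval c r hr a p hp,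
      φmH _ m1 c r hr, φmH _ m2 a p hp, φmH _ m3 b q hq]
    simp only [map_sub, map_smul]
    module
  -- Cocycle identity
  have coc : IsCocycle μ φ := by
    intro X Y Z
    obtain ⟨a, p, hp, rfl⟩ := decomp X
    obtain ⟨b, q, hq, rfl⟩ := decomp Y
    obtain ⟨c, r, hr, rfl⟩ := decomp Z
    have m1 : a • D q - b • D p ∈ H :=
      H.sub_mem (H.smul_mem _ (hDH q hq)) (H.smul_mem _ (hDH p hp))
    have m2 : b • D r - c • D q ∈ H :=
      H.sub_mem (H.smul_mem _ (hDH r hr)) (H.smul_mem _ (hDH q hq))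
    have m3 : c • D p - a • D r ∈ H :=
      H.sub_mem (H.smul_mem _ (hDH p hp)) (H.smul_mem _ (hDH r hr))
    -- expansion of μ (m) (c•x + r) for arbitrary m
    have μexp : ∀ (m : V n) (c : ℂ) (r : V n), μ m (c • x + r) = -(c • μ x m) + μ m r := by
      intro m c r
      simp only [map_add, map_smul, μskew m x]
      module
    have hd1 : D (μ p q) = μ (D p) q - μ (D q) p := by
      rw [hder p hp q hq, μskew p (D q)]; abel
    have hd2 : D (μ q r) = μ (D q) r - μ (D r) q := by
      rw [hder q hq r hr, μskew q (D r)]; abel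
    have hd3 : D (μ r p) = μ (D r) p - μ (D p) r := by
      rw [hder r hr p hp, μskew r (D p)]; abel
    show circ μ φ _ _ _ + circ φ μ _ _ _ = 0
    rw [circ, circ,
      φval a p hp b q hq, φval b q hq c r hr, φval c r hr a p hp,
      μexp _ c r, μexp _ a p, μexp _ b q,
      φmH _ (μmem a p hp b q hq) c r hr,
      φmH _ (μmem b q hq c r hr) a p hp,
      φmH _ (μmem c r hr a p hp) b q hq,
      μval a p hp b q hq, μval b q hq c r hr, μval c r hr a p hp]
    simp only [map_sub, map_add, map_smul, LinearMap.sub_apply, LinearMap.smul_apply,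
      hd1, hd2, hd3]
    module
  refine ⟨jacφ, coc, ?_⟩
  intro t X Y Z
  have key : circ (μ + t • φ) (μ + t • φ) X Y Z =
      circ μ μ X Y Z + t • (circ μ φ X Y Z + circ φ μ X Y Z) + (t * t) • circ φ φ X Y Z := by
    simp only [circ, LinearMap.add_apply, LinearMap.smul_apply, map_add, map_smul]
    module
  rw [key, hμjac X Y Z, coc X Y Z, jacφ X Y Z]
  simp
end
end

section
/- Let μ be a filiform Lie algebra of odd dimension n with adapted basis. Then for 1 ≤ i < j, μ(x_i,x_j) lies in span{x_k : k ≥ i+j+1}. -/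
open scoped BigOperators

noncomputable section

/-- for odd `n` and `1 ≤ i < j`, `μ(x_i,x_j) ∈ span{x_k : k ≥ i+j+1}`. -/
theorem bracket_mem_span_odd (n : ℕ) (hn : 3 ≤ n) (hodd : Odd n)
    (μ : Bil n) (a : ℕ → ℕ → ℂ) (hμ : AdaptedForm n μ a) :
    ∀ i j, 1 ≤ i → i < j → j ≤ n - 1 →
      μ (e n i) (e n j) ∈
        Submodule.span ℂ {v : V n | ∃ k, i + j + 1 ≤ k ∧ k ≤ n - 1 ∧ v = e n k} := by
  intro i j hi hij hj
  rw [hμ.2.2.2.2 i j hi hij hj]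
  apply Submodule.sum_mem
  intro p hp
  apply Submodule.smul_mem
  unfold psiCoef
  split
  · rename_i h
    apply Submodule.smul_mem
    apply Submodule.subset_span
    refine ⟨i + j + p.2 - 2 * p.1 - 1, ?_, h.2.2.2.2, rfl⟩
    simp only [Delta, Finset.mem_filter] at hp
    rcases hp.2 with ⟨_, hs, _⟩ | ⟨heven, _⟩
    · omega
    · exact absurd heven (Nat.not_even_iff_odd.mpr hodd)
  · exact Submodule.zero_mem _
end
end

section
/- Let μ be a filiform Lie algebra on ℂ^n (n ≥ 6) with adapted basis {x₀,…,x_{n-1}} and let 𝔥 = span{x₂,…,x_{n-1}} = [ℂ^n,ℂ^n]. The linear map D³: 𝔥 → 𝔥 defined by D³(x₂)=x_{n-3}, D³(x₃)=x_{n-2}, D³(x₄)=x_{n-1}, D³(x_i)=0 for i≥5, is a nilpotent derivation of 𝔥 satisfying D³∘ad(x₀) = ad(x₀)∘D³ on 𝔥. -/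
open scoped BigOperators

noncomputable section

/-- `D³` is a nilpotent derivation of `𝔥 = span{x₂,…,x_{n-1}}` commuting
with `ad(x₀)` on `𝔥`. -/
theorem D3_derivation (n : ℕ) (hn : 6 ≤ n) (μ : Bil n) (a : ℕ → ℕ → ℂ)
    (hμ : AdaptedForm n μ a)
    (D : V n →ₗ[ℂ] V n)
    (hD0 : D (e n 0) = 0) (hD1 : D (e n 1) = 0)
    (hD2 : D (e n 2) = e n (n - 3)) (hD3 : D (e n 3) = e n (n - 2))
    (hD4 : D (e n 4) = e n (n - 1))
    (hDhi : ∀ i, 5 ≤ i → D (e n i) = 0) :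
    (∀ h ∈ Hspan n, D h ∈ Hspan n) ∧
    IsNilpotent (D : Module.End ℂ (V n)) ∧
    (∀ h ∈ Hspan n, ∀ h' ∈ Hspan n, D (μ h h') = μ (D h) h' + μ h (D h')) ∧
    (∀ h ∈ Hspan n, D (μ (e n 0) h) = μ (e n 0) (D h)) := by
  obtain ⟨halt, hjac, had, htop, hsum⟩ := hμ
  -- skew symmetry
  have hskew : ∀ X Y : V n, μ X Y = -μ Y X := by
    intro X Y
    have h := halt (X + Y)
    simp only [map_add, LinearMap.add_apply, halt X, halt Y, zero_add, add_zero] at h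
    exact eq_neg_of_add_eq_zero_right h
  have hgen : ∀ k, 2 ≤ k → k < n → e n k ∈ Hspan n :=
    fun k h1 h2 => Submodule.subset_span ⟨k, h1, h2, rfl⟩
  -- μ(e_i, e_j) = 0 when i+j ≥ n (ordered)
  have hmuzero : ∀ i j, 2 ≤ i → i < j → j ≤ n - 1 → n ≤ i + j → μ (e n i) (e n j) = 0 := by
    intro i j hi hij hj hsumn
    rw [hsum i j (by omega) hij hj]
    apply Finset.sum_eq_zero
    intro p hp
    simp only [Delta, Finset.mem_filter, Finset.mem_product, Finset.mem_range] at hp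
    rw [psiCoef, if_neg, smul_zero]
    rintro ⟨h1, h2, h3, h4, h5⟩
    rcases hp.2 with ⟨c1, c2, c3⟩ | ⟨_, c2, c3⟩ <;> omega
  -- D kills μ(e_i, e_j) for 2 ≤ i < j
  have hDmu0 : ∀ i j, 2 ≤ i → i < j → j ≤ n - 1 → D (μ (e n i) (e n j)) = 0 := by
    intro i j hi hij hj
    rw [hsum i j (by omega) hij hj, map_sum]
    apply Finset.sum_eq_zero
    intro p hp
    simp only [Delta, Finset.mem_filter, Finset.mem_product, Finset.mem_range] at hp
    rw [map_smul, psiCoef]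
    split_ifs with hcond
    · rw [map_smul, hDhi _ ?_, smul_zero, smul_zero]
      obtain ⟨h1, h2, h3, h4, h5⟩ := hcond
      rcases hp.2 with ⟨c1, c2, c3⟩ | ⟨_, c2, c3⟩ <;> omega
    · rw [map_zero, smul_zero]
  -- unordered version of hmuzero
  have hmuzero' : ∀ p q, 2 ≤ p → 2 ≤ q → p < n → q < n → n ≤ p + q → μ (e n p) (e n q) = 0 := by
    intro p q hp hq hpn hqn hs
    rcases lt_trichotomy p q with h | h | h
    · exact hmuzero p q hp h (by omega) hs
    · subst h; exact halt _
    · rw [hskew, hmuzero q p hq h (by omega) (by omega), neg_zero]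
  have hder_lt : ∀ i j, 2 ≤ i → i < j → j < n →
      D (μ (e n i) (e n j)) = μ (D (e n i)) (e n j) + μ (e n i) (D (e n j)) := by
    intro i j hi hij hj
    rw [hDmu0 i j hi hij (by omega)]
    have t1 : μ (D (e n i)) (e n j) = 0 := by
      rcases Nat.lt_or_ge i 5 with h5 | h5
      · interval_cases i
        · rw [hD2]; exact hmuzero' (n-3) j (by omega) (by omega) (by omega) hj (by omega)
        · rw [hD3]; exact hmuzero' (n-2) j (by omega) (by omega) (by omega) hj (by omega)
        · rw [hD4]; exact hmuzero' (n-1) j (by omega) (by omega) (by omega) hj (by omega)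
      · rw [hDhi i h5]; simp
    have t2 : μ (e n i) (D (e n j)) = 0 := by
      have hj3 : 3 ≤ j := by omega
      rcases Nat.lt_or_ge j 5 with h5 | h5
      · interval_cases j
        · rw [hD3]; exact hmuzero' i (n-2) hi (by omega) (by omega) (by omega) (by omega)
        · rw [hD4]; exact hmuzero' i (n-1) hi (by omega) (by omega) (by omega) (by omega)
      · rw [hDhi j h5]; simp
    rw [t1, t2, add_zero]
  have hder : ∀ i j, 2 ≤ i → i < n → 2 ≤ j → j < n →
      D (μ (e n i) (e n j)) = μ (D (e n i)) (e n j) + μ (e n i) (D (e n j)) := by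
    intro i j hi hin hj hjn
    rcases lt_trichotomy i j with h | h | h
    · exact hder_lt i j hi h hjn
    · subst h
      rw [halt, map_zero, hskew (e n i) (D (e n i))]
      abel
    · have key := hder_lt j i hj h hin
      rw [hskew (e n i) (e n j), map_neg, key, hskew (e n i) (D (e n j)),
        hskew (D (e n i)) (e n j)]
      abel
  -- Part 1
  have part1 : ∀ h ∈ Hspan n, D h ∈ Hspan n := by
    intro h hh
    induction hh using Submodule.span_induction with
    | mem x hx =>
      obtain ⟨k, hk2, hkn, rfl⟩ := hx
      rcases Nat.lt_or_ge k 5 with h5 | h5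
      · interval_cases k
        · rw [hD2]; exact hgen _ (by omega) (by omega)
        · rw [hD3]; exact hgen _ (by omega) (by omega)
        · rw [hD4]; exact hgen _ (by omega) (by omega)
      · rw [hDhi k h5]; exact zero_mem _
    | zero => rw [map_zero]; exact zero_mem _
    | add x y hx hy ihx ihy => rw [map_add]; exact add_mem ihx ihy
    | smul a x hx ih => rw [map_smul]; exact Submodule.smul_mem _ _ ih
  -- Part 2
  have hDD : ∀ k, 4 ≤ k → D (D (e n k)) = 0 := by
    intro k hk
    rcases eq_or_lt_of_le hk with h | h
    · rw [← h, hD4, hDhi (n-1) (by omega)]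
    · rw [hDhi k (by omega), map_zero]
  have hDDD : ∀ k, 3 ≤ k → D (D (D (e n k))) = 0 := by
    intro k hk
    rcases eq_or_lt_of_le hk with h | h
    · rw [← h, hD3]; exact hDD (n-2) (by omega)
    · rw [hDD k (by omega), map_zero]
  have hD4' : ∀ k, D (D (D (D (e n k)))) = 0 := by
    intro k
    rcases Nat.lt_or_ge k 2 with h | h
    · interval_cases k
      · rw [hD0]; simp
      · rw [hD1]; simp
    · rcases eq_or_lt_of_le h with h2 | h2
      · rw [← h2, hD2]; exact hDDD (n-3) (by omega)
      · rw [hDDD k (by omega), map_zero]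
  have part2 : IsNilpotent (D : Module.End ℂ (V n)) := by
    refine ⟨4, ?_⟩
    apply Module.Basis.ext (Pi.basisFun ℂ (Fin n))
    intro i
    have he : (Pi.basisFun ℂ (Fin n)) i = e n i.val := by
      simp [e, i.isLt]
    rw [he]
    show (D^4) (e n i.val) = (0 : Module.End ℂ (V n)) (e n i.val)
    simp only [Module.End.pow_apply, Function.iterate_succ, Function.iterate_zero,
      Function.comp_apply, id_eq, LinearMap.zero_apply]
    exact hD4' i.val
  -- Part 3
  have step1 : ∀ h ∈ Hspan n, ∀ k, 2 ≤ k → k < n →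
      D (μ h (e n k)) = μ (D h) (e n k) + μ h (D (e n k)) := by
    intro h hh
    induction hh using Submodule.span_induction with
    | mem x hx =>
      obtain ⟨i, hi2, hin, rfl⟩ := hx
      intro k hk2 hkn
      exact hder i k hi2 hin hk2 hkn
    | zero => intro k _ _; simp
    | add x y hx hy ihx ihy =>
      intro k hk2 hkn
      simp only [map_add, LinearMap.add_apply]
      rw [ihx k hk2 hkn, ihy k hk2 hkn]
      abel
    | smul a x hx ih =>
      intro k hk2 hkn
      simp only [map_smul, LinearMap.smul_apply]
      rw [ih k hk2 hkn, smul_add]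
  have part3 : ∀ h ∈ Hspan n, ∀ h' ∈ Hspan n, D (μ h h') = μ (D h) h' + μ h (D h') := by
    intro h hh h' hh'
    induction hh' using Submodule.span_induction with
    | mem x hx =>
      obtain ⟨k, hk2, hkn, rfl⟩ := hx
      exact step1 h hh k hk2 hkn
    | zero => simp
    | add x y hx hy ihx ihy =>
      simp only [map_add]
      rw [ihx, ihy]
      abel
    | smul a x hx ih =>
      simp only [map_smul]
      rw [ih, smul_add]
  -- Part 4
  have part4 : ∀ h ∈ Hspan n, D (μ (e n 0) h) = μ (e n 0) (D h) := by
    intro h hh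
    induction hh using Submodule.span_induction with
    | mem x hx =>
      obtain ⟨k, hk2, hkn, rfl⟩ := hx
      rcases Nat.lt_or_ge k 5 with h5 | h5
      · interval_cases k
        · rw [had 2 (by omega) (by omega), show (2:ℕ)+1 = 3 from rfl, hD3, hD2,
            had (n-3) (by omega) (by omega), show n-3+1 = n-2 by omega]
        · rw [had 3 (by omega) (by omega), show (3:ℕ)+1 = 4 from rfl, hD4, hD3,
            had (n-2) (by omega) (by omega), show n-2+1 = n-1 by omega]
        · rw [had 4 (by omega) (by omega), show (4:ℕ)+1 = 5 from rfl, hDhi 5 (by omega),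
            hD4, htop]
      · rcases Nat.lt_or_ge k (n-1) with hk | hk
        · rw [had k (by omega) (by omega), hDhi (k+1) (by omega), hDhi k h5, map_zero]
        · have hkeq : k = n - 1 := by omega
          subst hkeq
          rw [htop, map_zero, hDhi (n-1) (by omega), map_zero]
    | zero => simp
    | add x y hx hy ihx ihy => simp only [map_add]; rw [ihx, ihy]
    | smul a x hx ih => simp only [map_smul]; rw [ih]
  exact ⟨part1, part2, part3, part4⟩
end
end

section
/- Let μ be a filiform Lie algebra on ℂ^n with n ≥ 7 odd, adapted basis {x₀,…,x_{n-1}}, and 𝔥 = span{x₂,…,x_{n-1}}. The linear map D⁴: 𝔥 → 𝔥 defined by D⁴(x₂)=x_{n-4}, D⁴(x₃)=x_{n-3}, D⁴(x₄)=x_{n-2}, D⁴(x₅)=x_{n-1}, D⁴(x_i)=0 for i≥6, is a nilpotent derivation of 𝔥 satisfying D⁴∘ad(x₀) = ad(x₀)∘D⁴ on 𝔥. -/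
open scoped BigOperators

noncomputable section

/-- for odd `n ≥ 7`, `D⁴` is a nilpotent derivation of
`𝔥 = span{x₂,…,x_{n-1}}` commuting with `ad(x₀)` on `𝔥`. -/
theorem D4_derivation (n : ℕ) (hn : 7 ≤ n) (hodd : Odd n)
    (μ : Bil n) (a : ℕ → ℕ → ℂ) (hμ : AdaptedForm n μ a)
    (D : V n →ₗ[ℂ] V n)
    (hD0 : D (e n 0) = 0) (hD1 : D (e n 1) = 0)
    (hD2 : D (e n 2) = e n (n - 4)) (hD3 : D (e n 3) = e n (n - 3))
    (hD4 : D (e n 4) = e n (n - 2)) (hD5 : D (e n 5) = e n (n - 1))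
    (hDhi : ∀ i, 6 ≤ i → D (e n i) = 0) :
    (∀ h ∈ Hspan n, D h ∈ Hspan n) ∧
    IsNilpotent (D : Module.End ℂ (V n)) ∧
    (∀ h ∈ Hspan n, ∀ h' ∈ Hspan n, D (μ h h') = μ (D h) h' + μ h (D h')) ∧
    (∀ h ∈ Hspan n, D (μ (e n 0) h) = μ (e n 0) (D h)) := by
  obtain ⟨halt, hjac, hbr, htop, hform⟩ := hμ
  have hnot : ¬ Even n := Nat.not_even_iff_odd.mpr hodd
  -- basic facts about `e`
  have e_zero : ∀ k, n ≤ k → e n k = 0 := fun k hk => dif_neg (by omega)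
  -- antisymmetry
  have anti : ∀ x y : V n, μ x y = - μ y x := by
    intro x y
    have h := halt (x + y)
    simp only [map_add, LinearMap.add_apply, halt x, halt y, zero_add, add_zero] at h
    exact eq_neg_of_add_eq_zero_right h
  -- uniform formula for D on e_k, k ≥ 2
  have D_apply : ∀ k, 2 ≤ k → D (e n k) = e n (n - 6 + k) := by
    intro k hk
    rcases Nat.lt_or_ge k 6 with hk6 | hk6
    · interval_cases k
      · rw [show n - 6 + 2 = n - 4 by omega, hD2]
      · rw [show n - 6 + 3 = n - 3 by omega, hD3]
      · rw [show n - 6 + 4 = n - 2 by omega, hD4]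
      · rw [show n - 6 + 5 = n - 1 by omega, hD5]
    · rw [hDhi k hk6, e_zero]; omega
  have D_hi : ∀ k, 6 ≤ k → D (e n k) = 0 := hDhi
  -- vanishing of μ on high basis vectors, i < j case
  have mu_zero : ∀ i j, 1 ≤ i → i < j → j ≤ n - 1 → n - 1 ≤ i + j →
      μ (e n i) (e n j) = 0 := by
    intro i j hi hij hj hbig
    rw [hform i j hi hij hj]
    apply Finset.sum_eq_zero
    intro p hp
    simp only [Delta, Finset.mem_filter, Finset.mem_product] at hp
    have hps : 2 * p.1 + 1 < p.2 := by
      rcases hp.2 with h | h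
      · exact h.2.1
      · exact absurd h.1 hnot
    rw [psiCoef, if_neg, smul_zero]
    rintro ⟨-, -, -, -, c5⟩
    omega
  -- vanishing of μ on high basis vectors, general
  have mu_big : ∀ i j, 2 ≤ i → 2 ≤ j → n - 1 ≤ i + j → μ (e n i) (e n j) = 0 := by
    intro i j hi hj hbig
    rcases Nat.lt_or_ge i n with hin | hin
    · rcases Nat.lt_or_ge j n with hjn | hjn
      · rcases lt_trichotomy i j with h | h | h
        · exact mu_zero i j (by omega) h (by omega) hbig
        · subst h; exact halt _
        · rw [anti, mu_zero j i (by omega) h (by omega) (by omega), neg_zero]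
      · rw [e_zero j hjn, map_zero]
    · rw [e_zero i hin, map_zero, LinearMap.zero_apply]
  -- D kills μ(e_i, e_j) for i, j ≥ 2
  have Dmu_lt : ∀ i j, 2 ≤ i → i < j → j ≤ n - 1 → D (μ (e n i) (e n j)) = 0 := by
    intro i j hi hij hj
    rw [hform i j (by omega) hij hj, map_sum]
    apply Finset.sum_eq_zero
    intro p hp
    simp only [Delta, Finset.mem_filter, Finset.mem_product] at hp
    have hps : 2 * p.1 + 1 < p.2 := by
      rcases hp.2 with h | h
      · exact h.2.1
      · exact absurd h.1 hnot
    rw [map_smul, psiCoef]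
    split_ifs with hc
    · rw [map_smul, D_hi _ (by omega), smul_zero, smul_zero]
    · rw [map_zero, smul_zero]
  have Dmu : ∀ i j, 2 ≤ i → 2 ≤ j → D (μ (e n i) (e n j)) = 0 := by
    intro i j hi hj
    rcases Nat.lt_or_ge i n with hin | hin
    · rcases Nat.lt_or_ge j n with hjn | hjn
      · rcases lt_trichotomy i j with h | h | h
        · exact Dmu_lt i j hi h (by omega)
        · subst h; rw [halt, map_zero]
        · rw [anti, map_neg, Dmu_lt j i hj h (by omega), neg_zero]
      · rw [e_zero j hjn, map_zero, map_zero]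
    · rw [e_zero i hin, map_zero, LinearMap.zero_apply, map_zero]
  -- Part 1 : D maps Hspan into Hspan
  have part1 : ∀ h ∈ Hspan n, D h ∈ Hspan n := by
    intro h hh
    induction hh using Submodule.span_induction with
    | mem x hx =>
      obtain ⟨k, hk2, hkn, rfl⟩ := hx
      rw [D_apply k hk2]
      rcases Nat.lt_or_ge (n - 6 + k) n with hlt | hge
      · exact Submodule.subset_span ⟨n - 6 + k, by omega, hlt, rfl⟩
      · rw [e_zero _ hge]; exact Submodule.zero_mem _
    | zero => rw [map_zero]; exact Submodule.zero_mem _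
    | add x y hx hy ihx ihy => rw [map_add]; exact Submodule.add_mem _ ihx ihy
    | smul c x hx ihx => rw [map_smul]; exact Submodule.smul_mem _ _ ihx
  -- Part 2 : nilpotency, D^5 = 0
  have part2 : IsNilpotent (D : Module.End ℂ (V n)) := by
    refine ⟨5, ?_⟩
    apply Module.Basis.ext (Pi.basisFun ℂ (Fin n))
    intro i
    have hb : (Pi.basisFun ℂ (Fin n)) i = e n i.val := by
      rw [e, dif_pos i.isLt]
      simp [Pi.basisFun_apply]
    have hpow : ∀ x : V n, (D ^ 5 : Module.End ℂ (V n)) x = D (D (D (D (D x)))) := by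
      intro x
      rw [Module.End.pow_apply]
      rfl
    rw [hb, LinearMap.zero_apply, hpow]
    rcases Nat.lt_or_ge i.val 2 with h2 | h2
    · interval_cases h : i.val
      · rw [hD0, map_zero, map_zero, map_zero, map_zero]
      · rw [hD1, map_zero, map_zero, map_zero, map_zero]
    · rw [D_apply _ h2, D_apply _ (by omega), D_apply _ (by omega),
        D_apply _ (by omega), D_apply _ (by omega), e_zero]
      omega
  -- Part 3 : derivation property on Hspan
  have gen3 : ∀ i j, 2 ≤ i → 2 ≤ j →
      D (μ (e n i) (e n j)) = μ (D (e n i)) (e n j) + μ (e n i) (D (e n j)) := by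
    intro i j hi hj
    rw [Dmu i j hi hj, D_apply i hi, D_apply j hj]
    rcases Nat.lt_or_ge (i + j) 5 with h5 | h5
    · -- i = j = 2
      have hi2 : i = 2 := by omega
      have hj2 : j = 2 := by omega
      subst hi2; subst hj2
      rw [anti (e n (n - 6 + 2)) (e n 2)]
      abel
    · rw [mu_big _ _ (by omega) hj (by omega), mu_big _ _ hi (by omega) (by omega),
        add_zero]
  have part3 : ∀ h ∈ Hspan n, ∀ h' ∈ Hspan n,
      D (μ h h') = μ (D h) h' + μ h (D h') := by
    intro h hh h' hh'
    induction hh using Submodule.span_induction with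
    | mem x hx =>
      obtain ⟨k, hk2, hkn, rfl⟩ := hx
      induction hh' using Submodule.span_induction with
      | mem y hy =>
        obtain ⟨l, hl2, hln, rfl⟩ := hy
        exact gen3 k l hk2 hl2
      | zero => simp
      | add u v hu hv ihu ihv =>
        simp only [map_add, LinearMap.add_apply, ihu, ihv]
        abel
      | smul c u hu ihu =>
        simp only [map_smul, LinearMap.smul_apply, ihu, smul_add]
    | zero => simp
    | add u v hu hv ihu ihv =>
      simp only [map_add, LinearMap.add_apply, ihu, ihv]
      abel
    | smul c u hu ihu =>
      simp only [map_smul, LinearMap.smul_apply, ihu, smul_add]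
  -- Part 4 : commutation with ad(x₀) on Hspan
  have gen4 : ∀ k, 2 ≤ k → k < n → D (μ (e n 0) (e n k)) = μ (e n 0) (D (e n k)) := by
    intro k hk2 hkn
    rcases Nat.lt_or_ge k 5 with h5 | h5
    · -- k = 2, 3, 4
      rw [hbr k (by omega) (by omega), D_apply _ (by omega), D_apply _ hk2,
        hbr (n - 6 + k) (by omega) (by omega), show n - 6 + (k + 1) = n - 6 + k + 1 by omega]
    rcases Nat.eq_or_lt_of_le h5 with h5' | h6
    · -- k = 5
      rw [← h5', hbr 5 (by omega) (by omega), hDhi 6 (by omega), hD5, htop]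
    rcases Nat.lt_or_ge k (n - 1) with hlt | hge
    · -- 6 ≤ k ≤ n - 2
      rw [hbr k (by omega) (by omega), hDhi (k + 1) (by omega), hDhi k (by omega),
        map_zero]
    · -- k = n - 1
      have : k = n - 1 := by omega
      rw [this, htop, map_zero, hDhi (n - 1) (by omega), map_zero]
  have part4 : ∀ h ∈ Hspan n, D (μ (e n 0) h) = μ (e n 0) (D h) := by
    intro h hh
    induction hh using Submodule.span_induction with
    | mem x hx =>
      obtain ⟨k, hk2, hkn, rfl⟩ := hx
      exact gen4 k hk2 hkn
    | zero => simp
    | add u v hu hv ihu ihv => rw [map_add, map_add, map_add, ihu, ihv, map_add]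
    | smul c u hu ihu => rw [map_smul, map_smul, map_smul, ihu, map_smul]
  exact ⟨part1, part2, part3, part4⟩
end
end

section
/- For a filiform Lie algebra μ in adapted-basis form on ℂ^n, the cocycle φ_{D³} associated to the derivation D³ (via Proposition 1 with 𝔥 = [ℂ^n,ℂ^n]) equals the standard cocycle ψ_{1,n-3}; and for n odd, φ_{D⁴} = ψ_{1,n-4}. -/
open scoped BigOperators

noncomputable section

lemma mem_Hspan (n k : ℕ) (h2 : 2 ≤ k) (hk : k < n) : e n k ∈ Hspan n :=
  Submodule.subset_span ⟨k, h2, hk, rfl⟩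

lemma key_phiD (n : ℕ) (hn : 6 ≤ n) (m : ℕ) (hm : 2 ≤ m) (hmn : m ≤ n - 2)
    (D : V n →ₗ[ℂ] V n)
    (hD : ∀ k, 2 ≤ k → k ≤ m + 1 → D (e n k) = e n (n - m + (k - 2)))
    (hDhi : ∀ k, m + 2 ≤ k → D (e n k) = 0)
    (φ : Bil n)
    (hφ01 : φ (e n 0) (e n 1) = 0)
    (hφ0h : ∀ h ∈ Hspan n, φ (e n 0) h = 0)
    (hφ1h : ∀ h ∈ Hspan n, φ (e n 1) h = D h)
    (hφhh : ∀ h ∈ Hspan n, ∀ h' ∈ Hspan n, φ h h' = 0) :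
    ∀ i j, i < j → j ≤ n - 1 → φ (e n i) (e n j) = psiCoef n 1 (n - m) i j := by
  intro i j hij hj
  have hjn : j < n := by omega
  rcases i with _ | _ | i
  · rcases j with _ | _ | j
    · omega
    · rw [hφ01, psiCoef, if_neg (by omega)]
    · rw [hφ0h _ (mem_Hspan n _ (by omega) hjn), psiCoef, if_neg (by omega)]
  · rw [hφ1h _ (mem_Hspan n j (by omega) hjn)]
    by_cases hjm : j ≤ m + 1
    · rw [hD j (by omega) hjm, psiCoef,
        if_pos ⟨le_refl 1, le_refl 1, by omega, hj, by omega⟩]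
      have h1 : 1 + j + (n - m) - 2 * 1 - 1 = n - m + (j - 2) := by omega
      rw [h1]
      simp
    · rw [hDhi j (by omega), psiCoef, if_neg (by omega)]
  · rw [hφhh _ (mem_Hspan n _ (by omega) (by omega)) _ (mem_Hspan n j (by omega) hjn),
      psiCoef, if_neg (by omega)]

/-- the cocycle `φ_{D³}` equals the standard cocycle `ψ_{1,n-3}`, and for odd
`n` the cocycle `φ_{D⁴}` equals `ψ_{1,n-4}`. -/
theorem phiD_eq_psi (n : ℕ) (hn : 6 ≤ n)
    (D3 : V n →ₗ[ℂ] V n)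
    (hD32 : D3 (e n 2) = e n (n - 3)) (hD33 : D3 (e n 3) = e n (n - 2))
    (hD34 : D3 (e n 4) = e n (n - 1)) (hD3hi : ∀ i, 5 ≤ i → D3 (e n i) = 0)
    (φ3 : Bil n) (hφ3alt : IsAlt φ3)
    (hφ301 : φ3 (e n 0) (e n 1) = 0)
    (hφ30h : ∀ h ∈ Hspan n, φ3 (e n 0) h = 0)
    (hφ31h : ∀ h ∈ Hspan n, φ3 (e n 1) h = D3 h)
    (hφ3hh : ∀ h ∈ Hspan n, ∀ h' ∈ Hspan n, φ3 h h' = 0)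
    (D4 : V n →ₗ[ℂ] V n)
    (hD42 : D4 (e n 2) = e n (n - 4)) (hD43 : D4 (e n 3) = e n (n - 3))
    (hD44 : D4 (e n 4) = e n (n - 2)) (hD45 : D4 (e n 5) = e n (n - 1))
    (hD4hi : ∀ i, 6 ≤ i → D4 (e n i) = 0)
    (φ4 : Bil n) (hφ4alt : IsAlt φ4)
    (hφ401 : φ4 (e n 0) (e n 1) = 0)
    (hφ40h : ∀ h ∈ Hspan n, φ4 (e n 0) h = 0)
    (hφ41h : ∀ h ∈ Hspan n, φ4 (e n 1) h = D4 h)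
    (hφ4hh : ∀ h ∈ Hspan n, ∀ h' ∈ Hspan n, φ4 h h' = 0) :
    (∀ i j, i < j → j ≤ n - 1 → φ3 (e n i) (e n j) = psiCoef n 1 (n - 3) i j) ∧
    (Odd n → ∀ i j, i < j → j ≤ n - 1 → φ4 (e n i) (e n j) = psiCoef n 1 (n - 4) i j) := by
  constructor
  · refine key_phiD n hn 3 (by omega) (by omega) D3 ?_ ?_ φ3 hφ301 hφ30h hφ31h hφ3hh
    · intro k h2 h4
      interval_cases k
      · simpa using hD32
      · have h : n - 3 + (3 - 2) = n - 2 := by omega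
        rw [h]; exact hD33
      · have h : n - 3 + (4 - 2) = n - 1 := by omega
        rw [h]; exact hD34
    · intro k hk; exact hD3hi k hk
  · intro _
    refine key_phiD n hn 4 (by omega) (by omega) D4 ?_ ?_ φ4 hφ401 hφ40h hφ41h hφ4hh
    · intro k h2 h5
      interval_cases k
      · simpa using hD42
      · have h : n - 4 + (3 - 2) = n - 3 := by omega
        rw [h]; exact hD43
      · have h : n - 4 + (4 - 2) = n - 2 := by omega
        rw [h]; exact hD44
      · have h : n - 4 + (5 - 2) = n - 1 := by omega
        rw [h]; exact hD45
    · intro k hk; exact hD4hi k hk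
end
end

section
/- Let n ≥ 9, μ a filiform Lie algebra on ℂ^n in adapted-basis form, μ_t = μ + tφ_D its linear deformation (D = D³ or D⁴ as in the paper's construction), and g an isomorphism from μ_t to μ with matrix [g] = (m_{i,j}) in an adapted basis. Then m_{1,2} = 0, i.e., g(x₁) has no x₀-component. -/
open scoped BigOperators

noncomputable section

section Aux
variable {n : ℕ}

lemma coord_apply (k : ℕ) (h : k < n) (v : V n) : coord k v = v ⟨k, h⟩ := dif_pos h

lemma coord_fin (j : Fin n) (v : V n) : coord (j : ℕ) v = v j := by
  rw [coord_apply _ j.isLt]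

lemma coord_zero (k : ℕ) : coord k (0 : V n) = 0 := by
  unfold coord; split <;> rfl

lemma coord_add (k : ℕ) (u v : V n) : coord k (u + v) = coord k u + coord k v := by
  unfold coord; split <;> simp

lemma coord_neg (k : ℕ) (v : V n) : coord k (-v) = - coord k v := by
  unfold coord; split <;> simp

lemma coord_smul (k : ℕ) (c : ℂ) (v : V n) : coord k (c • v) = c * coord k v := by
  unfold coord; split <;> simp

lemma coord_sum (k : ℕ) {ι : Type*} (s : Finset ι) (f : ι → V n) :
    coord k (∑ i ∈ s, f i) = ∑ i ∈ s, coord k (f i) := by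
  unfold coord; split <;> simp

lemma e_of_ge (i : ℕ) (h : n ≤ i) : e n i = 0 := dif_neg (by omega)

lemma coord_e (k i : ℕ) (hi : i < n) : coord k (e n i) = if k = i then 1 else 0 := by
  unfold coord e
  rcases lt_or_ge k n with hk | hk
  · rw [dif_pos hk, dif_pos hi, Pi.single_apply]
    simp [Fin.ext_iff]
  · rw [dif_neg (by omega)]
    have : k ≠ i := by omega
    simp [this]

lemma expand_basis (v : V n) : v = ∑ i : Fin n, v i • e n (i : ℕ) := by
  funext k
  rw [Finset.sum_apply]
  have h : ∀ i : Fin n, (v i • e n (i : ℕ)) k = if k = i then v i else 0 := by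
    intro i
    have : e n (i : ℕ) = Pi.single i 1 := by
      unfold e; rw [dif_pos i.isLt]
    rw [this]
    by_cases hk : k = i <;> simp [Pi.single_apply, hk]
  simp only [h]
  rw [Finset.sum_ite_eq Finset.univ k (fun i => v i)]
  simp

lemma coord_bil (μ : Bil n) (l : ℕ) (X Y : V n) :
    coord l (μ X Y) = ∑ i : Fin n, ∑ j : Fin n, X i * Y j * coord l (μ (e n (i:ℕ)) (e n (j:ℕ))) := by
  conv_lhs => rw [expand_basis X, expand_basis Y]
  simp only [map_sum, map_smul, LinearMap.sum_apply, LinearMap.smul_apply, coord_sum,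
    coord_smul, Finset.mul_sum]
  rw [Finset.sum_comm]
  exact Finset.sum_congr rfl fun i _ => Finset.sum_congr rfl fun j _ => by ring

lemma antisym {μ : Bil n} (h : IsAlt μ) (X Y : V n) : μ X Y = - μ Y X := by
  have h2 := h (X + Y)
  simp only [map_add, LinearMap.add_apply, h X, h Y] at h2
  have : μ X Y + μ Y X = 0 := by
    rw [← h2]; abel
  linear_combination (norm := abel) this

end Aux
section Aux2
variable {n : ℕ}

lemma Delta_cases {r s : ℕ} (h : (r, s) ∈ Delta n) :
    (1 ≤ r ∧ 2 * r + 1 < s ∧ s ≤ n - 1) ∨ (Even n ∧ 2 * r = n - 2 ∧ s = n - 1) := by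
  simpa [Delta, Finset.mem_filter] using (Finset.mem_filter.mp h).2

/-- Low coordinates of `ψ_{r,s}(x_i,x_j)` vanish: all components sit in degree `≥ i+j`. -/
lemma coord_psi_lt {r s i j l : ℕ} (hd : (r, s) ∈ Delta n) (hl : l < i + j) :
    coord l (psiCoef n r s i j) = 0 := by
  unfold psiCoef
  split
  · rename_i hcond
    obtain ⟨h1, h2, h3, h4, h5⟩ := hcond
    rw [coord_smul, coord_e _ _ (by omega)]
    have : l ≠ i + j + s - 2 * r - 1 := by
      rcases Delta_cases hd with ⟨-, hs, -⟩ | ⟨-, hr, hs⟩ <;> omega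
    simp [this]
  · exact coord_zero l

/-- `ψ_{r,s}(x_i,x_j) = 0` when `i + j ≥ n`. -/
lemma psi_zero_of_big {r s i j : ℕ} (hd : (r, s) ∈ Delta n) (hn : 3 ≤ n) (hij : n ≤ i + j) :
    psiCoef n r s i j = 0 := by
  unfold psiCoef
  rw [if_neg]
  rintro ⟨h1, h2, h3, h4, h5⟩
  rcases Delta_cases hd with ⟨-, hs, -⟩ | ⟨-, hr, hs⟩ <;> omega

/-- The crucial vanishing: the `x_{n-2}`-component of `ψ_{r,s}(x_i,x_j)` is zero
whenever `1 ≤ i` and `n-3 ≤ j`. -/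
lemma coord_psi_top {r s i j : ℕ} (hd : (r, s) ∈ Delta n) (hn : 9 ≤ n)
    (hi : 1 ≤ i) (hj : n - 3 ≤ j) :
    coord (n - 2) (psiCoef n r s i j) = 0 := by
  unfold psiCoef
  split
  · rename_i hcond
    obtain ⟨h1, h2, h3, h4, h5⟩ := hcond
    rcases Delta_cases hd with ⟨-, hs, -⟩ | ⟨-, hr, hs⟩
    · rw [coord_smul, coord_e _ _ (by omega)]
      have : n - 2 ≠ i + j + s - 2 * r - 1 := by omega
      simp [this]
    · -- even case: index is i + j; only possibility is i = 1, j = n-3,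
      -- where the binomial coefficient vanishes
      by_cases hij : i + j = n - 2
      · have hi1 : i = 1 := by omega
        have hchoose : Nat.choose (j - r - 1) (r - i) = 0 :=
          Nat.choose_eq_zero_of_lt (by omega)
        rw [hchoose]
        simp [coord_zero]
      · rw [coord_smul, coord_e _ _ (by omega)]
        have : n - 2 ≠ i + j + s - 2 * r - 1 := by omega
        simp [this]
  · exact coord_zero _

/-- The submodule of vectors whose coordinates below `k` vanish. -/
def Wlow (n k : ℕ) : Submodule ℂ (V n) where
  carrier := {v | ∀ l, l < k → coord l v = 0}
  zero_mem' := fun l _ => coord_zero l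
  add_mem' := by
    intro u v hu hv l hl
    rw [coord_add, hu l hl, hv l hl, add_zero]
  smul_mem' := by
    intro c v hv l hl
    rw [coord_smul, hv l hl, mul_zero]

lemma mem_Wlow {k : ℕ} {v : V n} : v ∈ Wlow n k ↔ ∀ l, l < k → coord l v = 0 := Iff.rfl

end Aux2
section Aux3
variable {n : ℕ} {ν : Bil n}

/-- Hypotheses bundle: the bracket behaves like an adapted filiform bracket. -/
structure Nice (n : ℕ) (ν : Bil n) : Prop where
  alt : IsAlt ν
  p0 : ∀ j, 1 ≤ j → j ≤ n - 2 → ν (e n 0) (e n j) = e n (j + 1)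
  ptop : ν (e n 0) (e n (n - 1)) = 0
  p1 : ∀ i j l, 1 ≤ i → 1 ≤ j → l < i + j → coord l (ν (e n i) (e n j)) = 0

lemma Nice.nu0 (h : Nice n ν) {j l : ℕ} (hj : j < n) (hl : 1 ≤ j → l ≠ j + 1) :
    coord l (ν (e n 0) (e n j)) = 0 := by
  rcases Nat.eq_zero_or_pos j with rfl | hj1
  · rw [h.alt (e n 0), coord_zero]
  · rcases le_or_gt j (n - 2) with hj2 | hj2
    · rw [h.p0 j hj1 hj2, coord_e _ _ (by omega)]
      simp [hl hj1]
    · have : j = n - 1 := by omega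
      rw [this, h.ptop, coord_zero]

lemma Nice.nu (h : Nice n ν) {i j l : ℕ} (hi : i < n) (hj : j < n)
    (h1 : i = 0 → 1 ≤ j → l ≠ j + 1) (h2 : j = 0 → 1 ≤ i → l ≠ i + 1)
    (h3 : 1 ≤ i → 1 ≤ j → l < i + j) :
    coord l (ν (e n i) (e n j)) = 0 := by
  rcases Nat.eq_zero_or_pos i with rfl | hi1
  · exact h.nu0 hj (h1 rfl)
  · rcases Nat.eq_zero_or_pos j with rfl | hj1
    · rw [antisym h.alt, coord_neg, h.nu0 hi (fun _ => h2 rfl hi1), neg_zero]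
    · exact h.p1 i j l hi1 hj1 (h3 hi1 hj1)

lemma Nice.lcs_le (h : Nice n ν) : ∀ k, 1 ≤ k → lcs ν k ≤ Wlow n (k + 1) := by
  intro k hk
  induction k, hk using Nat.le_induction with
  | base =>
    refine Submodule.span_le.mpr ?_
    rintro z ⟨x, y, -, rfl⟩
    intro l hl
    rw [coord_bil]
    refine Finset.sum_eq_zero fun i _ => Finset.sum_eq_zero fun j _ => ?_
    rw [h.nu i.isLt j.isLt (by omega) (by omega) (by omega), mul_zero]
  | succ k hk ih =>
    refine Submodule.span_le.mpr ?_
    rintro z ⟨x, y, hy, rfl⟩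
    intro l hl
    rw [coord_bil]
    refine Finset.sum_eq_zero fun i _ => Finset.sum_eq_zero fun j _ => ?_
    by_cases hjk : (j : ℕ) < k + 1
    · have hy0 : y j = 0 := by
        have := ih hy (j : ℕ) hjk
        rwa [coord_fin] at this
      rw [hy0, mul_zero, zero_mul]
    · rw [h.nu i.isLt j.isLt (by omega) (by omega) (by omega), mul_zero]

lemma Nice.e_mem_lcs (h : Nice n ν) : ∀ k l, k + 1 ≤ l → l ≤ n - 1 → e n l ∈ lcs ν k := by
  intro k
  induction k with
  | zero => intro l _ _; exact Submodule.mem_top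
  | succ k ih =>
    intro l hl1 hl2
    have hmem : e n (l - 1) ∈ lcs ν k := ih (l - 1) (by omega) (by omega)
    have hval : ν (e n 0) (e n (l - 1)) = e n l := by
      rw [h.p0 (l - 1) (by omega) (by omega), show l - 1 + 1 = l by omega]
    exact Submodule.subset_span ⟨e n 0, e n (l - 1), hmem, hval⟩

lemma Nice.W_le_lcs (h : Nice n ν) (k : ℕ) : Wlow n (k + 1) ≤ lcs ν k := by
  intro v hv
  rw [expand_basis v]
  refine Submodule.sum_mem _ fun i _ => ?_
  by_cases hi : (i : ℕ) < k + 1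
  · have hv0 : v i = 0 := by
      have := hv (i : ℕ) hi
      rwa [coord_fin] at this
    rw [hv0, zero_smul]
    exact zero_mem _
  · exact Submodule.smul_mem _ _ (h.e_mem_lcs k (i : ℕ) (by omega) (by omega))

lemma map_lcs (ν ν' : Bil n) (g : V n ≃ₗ[ℂ] V n)
    (hg : ∀ X Y, g (ν X Y) = ν' (g X) (g Y)) :
    ∀ k x, x ∈ lcs ν k → g x ∈ lcs ν' k := by
  intro k
  induction k with
  | zero => intro x _; exact Submodule.mem_top
  | succ k ih =>
    intro x hx
    have hx' : x ∈ Submodule.span ℂ {z | ∃ u v, v ∈ lcs ν k ∧ ν u v = z} := hx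
    clear hx
    induction hx' using Submodule.span_induction with
    | mem z hz =>
      obtain ⟨u, v, hv, rfl⟩ := hz
      rw [hg]
      exact Submodule.subset_span ⟨g u, g v, ih v hv, rfl⟩
    | zero => rw [map_zero]; exact zero_mem _
    | add x y _ _ hx hy => rw [map_add]; exact add_mem hx hy
    | smul c x _ hx => rw [map_smul]; exact Submodule.smul_mem _ _ hx

end Aux3
section Aux4
variable {n : ℕ} {μ φ : Bil n} {a : ℕ → ℕ → ℂ} {m : ℕ}

lemma mut_apply (t : ℂ) (X Y : V n) : (μ + t • φ) X Y = μ X Y + t • φ X Y := rfl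

lemma hDelta1m (hn : 9 ≤ n) (hm : m = n - 3 ∨ (Odd n ∧ m = n - 4)) : (1, m) ∈ Delta n := by
  have hm' : m = n - 3 ∨ m = n - 4 := by
    rcases hm with h | ⟨-, h⟩
    · exact Or.inl h
    · exact Or.inr h
  refine Finset.mem_filter.mpr ⟨Finset.mem_product.mpr ⟨?_, ?_⟩, Or.inl ⟨le_refl 1, ?_, ?_⟩⟩
  · exact Finset.mem_range.mpr (by omega)
  · exact Finset.mem_range.mpr (by omega)
  · omega
  · omega

section MuFacts
variable (halt : IsAlt μ)
  (hform : ∀ i j, 1 ≤ i → i < j → j ≤ n - 1 →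
    μ (e n i) (e n j) = ∑ p ∈ Delta n, a p.1 p.2 • psiCoef n p.1 p.2 i j)

include halt hform

lemma mu_coord_lt {i j l : ℕ} (hi : 1 ≤ i) (hij : i < j) (hl : l < i + j) :
    coord l (μ (e n i) (e n j)) = 0 := by
  rcases lt_or_ge j n with hjn | hjn
  · rw [hform i j hi hij (by omega), coord_sum]
    refine Finset.sum_eq_zero fun p hp => ?_
    rw [coord_smul, coord_psi_lt (show (p.1, p.2) ∈ Delta n by rwa [Prod.mk.eta]) hl,
      mul_zero]
  · rw [e_of_ge j hjn, map_zero, coord_zero]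

lemma mu_p1 : ∀ i j l : ℕ, 1 ≤ i → 1 ≤ j → l < i + j → coord l (μ (e n i) (e n j)) = 0 := by
  intro i j l hi hj hl
  rcases lt_trichotomy i j with h | h | h
  · exact mu_coord_lt halt hform hi h hl
  · rw [h, halt (e n j), coord_zero]
  · rw [antisym halt, coord_neg, mu_coord_lt halt hform hj h (by omega), neg_zero]

omit halt hform in
lemma mu_nice (hμ : AdaptedForm n μ a) : Nice n μ :=
  ⟨hμ.1, hμ.2.2.1, hμ.2.2.2.1, mu_p1 hμ.1 hμ.2.2.2.2⟩

/-- The key top-coefficient vanishing for `μ`. -/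
lemma mu_coord_top (hn : 9 ≤ n) (hptop : μ (e n 0) (e n (n - 1)) = 0)
    (hp0 : ∀ j, 1 ≤ j → j ≤ n - 2 → μ (e n 0) (e n j) = e n (j + 1)) :
    ∀ i j : ℕ, i < n → j < n → n - 3 ≤ j → ¬(i = 0 ∧ j = n - 3) →
      coord (n - 2) (μ (e n i) (e n j)) = 0 := by
  intro i j hin hjn hj3 hnot
  rcases Nat.eq_zero_or_pos i with rfl | hi1
  · have : j = n - 2 ∨ j = n - 1 := by omega
    rcases this with rfl | rfl
    · rw [hp0 (n - 2) (by omega) (by omega), show n - 2 + 1 = n - 1 by omega,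
        coord_e _ _ (by omega)]
      simp [show n - 2 ≠ n - 1 by omega]
    · rw [hptop, coord_zero]
  · rcases lt_trichotomy i j with h | h | h
    · rw [hform i j hi1 h (by omega), coord_sum]
      refine Finset.sum_eq_zero fun p hp => ?_
      rw [coord_smul,
        coord_psi_top (show (p.1, p.2) ∈ Delta n by rwa [Prod.mk.eta]) hn hi1 hj3, mul_zero]
    · rw [h, halt (e n j), coord_zero]
    · rw [antisym halt, coord_neg, hform j i (by omega) h (by omega), coord_sum]
      have hz : ∀ p ∈ Delta n, a p.1 p.2 • psiCoef n p.1 p.2 j i = 0 := by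
        intro p hp
        rw [psi_zero_of_big (show (p.1, p.2) ∈ Delta n by rwa [Prod.mk.eta]) (by omega)
          (by omega), smul_zero]
      rw [Finset.sum_congr rfl fun p hp => by rw [hz p hp]]
      simp [coord_zero]
end MuFacts

section PhiFacts
variable (hφalt : IsAlt φ)
  (hφ : ∀ i j, i < j → j ≤ n - 1 → φ (e n i) (e n j) = psiCoef n 1 m i j)
  (hn : 9 ≤ n) (hm : m = n - 3 ∨ (Odd n ∧ m = n - 4))

include hφalt hφ hn hm

lemma phi0 : ∀ j, j < n → φ (e n 0) (e n j) = 0 := by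
  intro j hj
  rcases Nat.eq_zero_or_pos j with rfl | hj1
  · exact hφalt (e n 0)
  · rw [hφ 0 j hj1 (by omega)]
    unfold psiCoef
    rw [if_neg]
    rintro ⟨h1, -⟩
    omega

lemma phi_coord_lt {i j l : ℕ} (hij : i < j) (hl : l < i + j) :
    coord l (φ (e n i) (e n j)) = 0 := by
  rcases lt_or_ge j n with hjn | hjn
  · rw [hφ i j hij (by omega), coord_psi_lt (hDelta1m hn hm) hl]
  · rw [e_of_ge j hjn, map_zero, coord_zero]

lemma phi_p1 : ∀ i j l : ℕ, 1 ≤ i → 1 ≤ j → l < i + j →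
    coord l (φ (e n i) (e n j)) = 0 := by
  intro i j l hi hj hl
  rcases lt_trichotomy i j with h | h | h
  · exact phi_coord_lt hφalt hφ hn hm h hl
  · rw [h, hφalt (e n j), coord_zero]
  · rw [antisym hφalt, coord_neg, phi_coord_lt hφalt hφ hn hm h (by omega), neg_zero]

lemma phi13 : φ (e n 1) (e n (n - 3)) = 0 := by
  rw [hφ 1 (n - 3) (by omega) (by omega)]
  unfold psiCoef
  rw [if_neg]
  rintro ⟨-, -, -, -, h5⟩
  rcases hm with h | ⟨-, h⟩ <;> omega

lemma mut_nice (hμn : Nice n μ) (t : ℂ) : Nice n (μ + t • φ) := by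
  constructor
  · intro X
    rw [mut_apply, hμn.alt X, hφalt X, smul_zero, add_zero]
  · intro j hj1 hj2
    rw [mut_apply, hμn.p0 j hj1 hj2, phi0 hφalt hφ hn hm j (by omega), smul_zero, add_zero]
  · rw [mut_apply, hμn.ptop, phi0 hφalt hφ hn hm (n - 1) (by omega), smul_zero, add_zero]
  · intro i j l hi hj hl
    rw [mut_apply, coord_add, coord_smul, hμn.p1 i j l hi hj hl,
      phi_p1 hφalt hφ hn hm i j l hi hj hl, mul_zero, add_zero]

end PhiFacts
end Aux4
/-- for `n ≥ 9` and `g` an isomorphism from `μ_t = μ + tφ_D` to `μ`,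
the entry `m_{1,2}` vanishes: `g(x₁)` has no `x₀`-component. -/
theorem m12_eq_zero (n : ℕ) (hn : 9 ≤ n) (μ : Bil n) (a : ℕ → ℕ → ℂ)
    (hμ : AdaptedForm n μ a)
    (m : ℕ) (hm : m = n - 3 ∨ (Odd n ∧ m = n - 4))
    (φ : Bil n) (hφalt : IsAlt φ)
    (hφ : ∀ i j, i < j → j ≤ n - 1 → φ (e n i) (e n j) = psiCoef n 1 m i j)
    (t : ℂ) (g : V n ≃ₗ[ℂ] V n)
    (hg : ∀ X Y, g ((μ + t • φ) X Y) = μ (g X) (g Y)) :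
    coord 0 (g (e n 1)) = 0 := by
  have hμnice : Nice n μ := mu_nice hμ
  have hμtnice : Nice n (μ + t • φ) := mut_nice hφalt hφ hn hm hμnice t
  obtain ⟨halt, hjac, hp0, hptop, hform⟩ := hμ
  -- the inverse isomorphism intertwines the brackets in the other direction
  have hg' : ∀ X Y, g.symm (μ X Y) = (μ + t • φ) (g.symm X) (g.symm Y) := by
    intro X Y
    have h := hg (g.symm X) (g.symm Y)
    rw [g.apply_symm_apply, g.apply_symm_apply] at h
    rw [← h, g.symm_apply_apply]
  -- low coordinates of g(x_{n-3}) vanish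
  have hYlow : ∀ l, l < n - 3 → coord l (g (e n (n - 3))) = 0 := by
    have h1 : e n (n - 3) ∈ lcs (μ + t • φ) (n - 4) :=
      hμtnice.e_mem_lcs (n - 4) (n - 3) (by omega) (by omega)
    have h2 : g (e n (n - 3)) ∈ lcs μ (n - 4) := map_lcs _ _ g hg _ _ h1
    have h3 := hμnice.lcs_le (n - 4) (by omega) h2
    intro l hl
    exact h3 l (by omega)
  -- the x_{n-2}-coordinate of the LHS vanishes
  have hLHS : coord (n - 2) (g ((μ + t • φ) (e n 1) (e n (n - 3)))) = 0 := by
    have hmem : (μ + t • φ) (e n 1) (e n (n - 3)) ∈ Wlow n (n - 2 + 1) := by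
      intro l hl
      rw [mut_apply, coord_add, coord_smul, phi13 hφalt hφ hn hm, coord_zero, mul_zero, add_zero]
      rcases lt_or_ge l (n - 2) with hl2 | hl2
      · exact mu_p1 halt hform 1 (n - 3) l (by omega) (by omega) (by omega)
      · have : l = n - 2 := by omega
        rw [this]
        exact mu_coord_top halt hform hn hptop hp0 1 (n - 3) (by omega) (by omega)
          (by omega) (by omega)
    have h1 : (μ + t • φ) (e n 1) (e n (n - 3)) ∈ lcs (μ + t • φ) (n - 2) :=
      hμtnice.W_le_lcs (n - 2) hmem
    have h2 := map_lcs _ _ g hg _ _ h1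
    exact hμnice.lcs_le (n - 2) (by omega) h2 (n - 2) (by omega)
  -- the leading coefficient of g(x_{n-3}) is nonzero
  have hp : coord (n - 3) (g (e n (n - 3))) ≠ 0 := by
    intro hzero
    have hmem : g (e n (n - 3)) ∈ Wlow n (n - 3 + 1) := by
      intro l hl
      rcases lt_or_ge l (n - 3) with hl2 | hl2
      · exact hYlow l hl2
      · have : l = n - 3 := by omega
        rw [this]
        exact hzero
    have h1 : g (e n (n - 3)) ∈ lcs μ (n - 3) := hμnice.W_le_lcs (n - 3) hmem
    have h2 := map_lcs μ (μ + t • φ) g.symm hg' _ _ h1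
    rw [g.symm_apply_apply] at h2
    have h3 := hμtnice.lcs_le (n - 3) (by omega) h2 (n - 3) (by omega)
    rw [coord_e _ _ (by omega)] at h3
    simp at h3
  -- compare the x_{n-2}-coordinates of both sides
  set X := g (e n 1) with hX
  set Y := g (e n (n - 3)) with hY
  have key : coord (n - 2) (μ X Y) = 0 := by
    rw [← hg (e n 1) (e n (n - 3))]
    exact hLHS
  have hterm : ∀ i j : Fin n, ¬((i : ℕ) = 0 ∧ (j : ℕ) = n - 3) →
      X i * Y j * coord (n - 2) (μ (e n (i : ℕ)) (e n (j : ℕ))) = 0 := by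
    intro i j hnot
    rcases lt_or_ge (j : ℕ) (n - 3) with hj | hj
    · have : Y j = 0 := by
        have := hYlow (j : ℕ) hj
        rwa [coord_fin] at this
      rw [this, mul_zero, zero_mul]
    · rw [mu_coord_top halt hform hn hptop hp0 (i : ℕ) (j : ℕ) i.isLt j.isLt hj hnot,
        mul_zero]
  have hbil := coord_bil μ (n - 2) X Y
  rw [key] at hbil
  rw [Finset.sum_eq_single (⟨0, by omega⟩ : Fin n)] at hbil
  · rw [Finset.sum_eq_single (⟨n - 3, by omega⟩ : Fin n)] at hbil
    · have hval : coord (n - 2) (μ (e n ((⟨0, by omega⟩ : Fin n) : ℕ))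
          (e n ((⟨n - 3, by omega⟩ : Fin n) : ℕ))) = 1 := by
        show coord (n - 2) (μ (e n 0) (e n (n - 3))) = 1
        rw [hp0 (n - 3) (by omega) (by omega), show n - 3 + 1 = n - 2 by omega,
          coord_e _ _ (by omega)]
        simp
      rw [hval, mul_one] at hbil
      have hX0 : X ⟨0, by omega⟩ = coord 0 X := (coord_fin (⟨0, by omega⟩ : Fin n) X).symm
      have hYn3 : Y ⟨n - 3, by omega⟩ = coord (n - 3) Y :=
        (coord_fin (⟨n - 3, by omega⟩ : Fin n) Y).symm
      rw [hX0, hYn3] at hbil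
      rcases mul_eq_zero.mp hbil.symm with h | h
      · exact h
      · exact absurd h hp
    · intro j _ hjne
      refine hterm _ _ fun hc => hjne ?_
      exact Fin.ext hc.2
    · intro habs
      exact absurd (Finset.mem_univ _) habs
  · intro i _ hine
    refine Finset.sum_eq_zero fun j _ => hterm _ _ fun hc => hine ?_
    exact Fin.ext hc.1
  · intro habs
    exact absurd (Finset.mem_univ _) habs
end
end

section
/- Let n ≥ 9, μ filiform on ℂ^n with a_{1,4} ≠ 0, μ_t = μ + tφ_D, and g an isomorphism from μ_t to μ with matrix (m_{i,j}). Then m_{2,2} = m_{1,1}², hence m_{i,i} = m_{1,1}^i for 1 ≤ i ≤ n-1. -/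
open scoped BigOperators

noncomputable section

namespace DiagAux

variable {n : ℕ}

lemma coord_eq (k : ℕ) (h : k < n) (v : V n) : coord k v = v ⟨k, h⟩ := dif_pos h

lemma e_apply (i : ℕ) (q : Fin n) : e n i q = if i = (q : ℕ) then 1 else 0 := by
  unfold e
  rcases Nat.lt_or_ge i n with h | h
  · rw [dif_pos h, Pi.single_apply]
    by_cases hq : i = (q : ℕ)
    · rw [if_pos hq, if_pos (by exact Fin.ext hq.symm)]
    · rw [if_neg hq, if_neg (fun hc => hq (by rw [hc]))]
  · rw [dif_neg (not_lt.mpr h), if_neg (by omega), Pi.zero_apply]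

lemma vec_repr (X : V n) : X = ∑ k : Fin n, X k • e n (k : ℕ) := by
  funext q
  rw [Finset.sum_apply]
  simp only [Pi.smul_apply]
  have : ∀ k : Fin n, X k • e n (k : ℕ) q = if k = q then X k else 0 := by
    intro k
    rw [e_apply, smul_eq_mul]
    by_cases h : k = q
    · simp [h]
    · rw [if_neg (fun hc : (k:ℕ) = (q:ℕ) => h (Fin.ext hc)), if_neg h, mul_zero]
  rw [Finset.sum_congr rfl fun k _ => this k, Finset.sum_ite_eq' Finset.univ q fun k => X k]
  simp

lemma mu_expand (μ : Bil n) (X Y : V n) (q : Fin n) :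
    μ X Y q = ∑ k : Fin n, ∑ l : Fin n, X k * Y l * μ (e n (k:ℕ)) (e n (l:ℕ)) q := by
  conv_lhs => rw [vec_repr X, vec_repr Y]
  simp only [map_sum, map_smul, LinearMap.sum_apply, LinearMap.smul_apply,
    Finset.sum_apply, Pi.smul_apply, smul_eq_mul, mul_assoc]
  rw [Finset.sum_comm]
  exact Finset.sum_congr rfl fun k _ => by
    rw [Finset.mul_sum]; exact Finset.sum_congr rfl fun l _ => by ring

lemma mu_antisym {μ : Bil n} (halt : IsAlt μ) (X Y : V n) : μ Y X = - μ X Y := by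
  have h : μ Y X + μ X Y = 0 := by
    have h2 := halt (X + Y)
    simpa [map_add, LinearMap.add_apply, halt X, halt Y] using h2
  rw [add_comm] at h
  exact eq_neg_of_add_eq_zero_right h

lemma mem_Delta {p : ℕ × ℕ} (h : p ∈ Delta n) :
    p.1 < n ∧ p.2 < n ∧ ((1 ≤ p.1 ∧ 2 * p.1 + 1 < p.2 ∧ p.2 ≤ n - 1) ∨
      (Even n ∧ 2 * p.1 = n - 2 ∧ p.2 = n - 1)) := by
  have := h
  simp only [Delta, Finset.mem_filter, Finset.mem_product, Finset.mem_range] at this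
  exact ⟨this.1.1, this.1.2, this.2⟩

lemma sum2_single {N : ℕ} (f : Fin N → Fin N → ℂ) (k0 l0 : Fin N)
    (h : ∀ k l, ¬(k = k0 ∧ l = l0) → f k l = 0) :
    (∑ k, ∑ l, f k l) = f k0 l0 := by
  rw [Fintype.sum_eq_single k0 fun k hk => Finset.sum_eq_zero fun l _ => h k l (fun hc => hk hc.1)]
  exact Fintype.sum_eq_single l0 fun l hl => h k0 l (fun hc => hl hc.2)

end DiagAux
namespace DiagAux
lemma coord_val {n : ℕ} (v : V n) (q : Fin n) : coord (q : ℕ) v = v q := by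
  rw [coord_eq _ q.isLt]
end DiagAux
namespace DiagAux

variable {n : ℕ} {μ : Bil n} {a : ℕ → ℕ → ℂ}

lemma mu0c (halt : IsAlt μ)
    (hμ3 : ∀ j, 1 ≤ j → j ≤ n - 2 → μ (e n 0) (e n j) = e n (j + 1))
    (hμ4 : μ (e n 0) (e n (n - 1)) = 0)
    (l : ℕ) (hln : l < n) (q : Fin n) :
    μ (e n 0) (e n l) q = if ((q : ℕ) = l + 1 ∧ 1 ≤ l ∧ l ≤ n - 2) then 1 else 0 := by
  by_cases h1 : 1 ≤ l ∧ l ≤ n - 2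
  · rw [hμ3 l h1.1 h1.2, e_apply]
    by_cases h2 : (q : ℕ) = l + 1
    · rw [if_pos (by omega), if_pos ⟨h2, h1⟩]
    · rw [if_neg (by omega), if_neg (by tauto)]
  · rw [if_neg (by tauto)]
    have : l = 0 ∨ l = n - 1 := by omega
    rcases this with rfl | rfl
    · rw [halt (e n 0), Pi.zero_apply]
    · rw [hμ4, Pi.zero_apply]

lemma CVlt
    (hμ5 : ∀ i j, 1 ≤ i → i < j → j ≤ n - 1 →
      μ (e n i) (e n j) = ∑ p ∈ Delta n, a p.1 p.2 • psiCoef n p.1 p.2 i j)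
    (k l : ℕ) (hk : 1 ≤ k) (hkl : k < l) (hln : l < n)
    (q : Fin n) (hq : (q : ℕ) < k + l ∨ ((q : ℕ) = k + l ∧ k + l ≤ n - 2)) :
    μ (e n k) (e n l) q = 0 := by
  rw [hμ5 k l hk hkl (by omega), Finset.sum_apply]
  refine Finset.sum_eq_zero fun p hp => ?_
  obtain ⟨h1n, h2n, hd⟩ := mem_Delta hp
  rw [Pi.smul_apply, psiCoef]
  split_ifs with hc
  · rcases hd with ⟨hr1, hrs, hsn⟩ | ⟨hev, hre, hse⟩
    · -- regular: target index is > q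
      rw [Pi.smul_apply, e_apply, if_neg (by omega), smul_zero, smul_zero]
    · -- exceptional
      rcases hq with hq | ⟨hq1, hq2⟩
      · rw [Pi.smul_apply, e_apply, if_neg (by omega), smul_zero, smul_zero]
      · have hch : l - p.1 - 1 < p.1 - k := by omega
        rw [Nat.choose_eq_zero_of_lt hch, Nat.cast_zero, mul_zero, zero_smul, Pi.zero_apply,
          smul_zero]
  · rw [Pi.zero_apply, smul_zero]

lemma CV (halt : IsAlt μ)
    (hμ5 : ∀ i j, 1 ≤ i → i < j → j ≤ n - 1 →
      μ (e n i) (e n j) = ∑ p ∈ Delta n, a p.1 p.2 • psiCoef n p.1 p.2 i j)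
    (k l : ℕ) (hk : 1 ≤ k) (hl : 1 ≤ l) (hkn : k < n) (hln : l < n)
    (q : Fin n) (hq : (q : ℕ) < k + l ∨ ((q : ℕ) = k + l ∧ k + l ≤ n - 2)) :
    μ (e n k) (e n l) q = 0 := by
  rcases lt_trichotomy k l with h | h | h
  · exact CVlt hμ5 k l hk h hln q hq
  · subst h; rw [halt (e n k), Pi.zero_apply]
  · rw [mu_antisym halt, Pi.neg_apply, CVlt hμ5 l k hl h hkn q (by omega), neg_zero]

lemma E14 (hn : 9 ≤ n)
    (hμ5 : ∀ i j, 1 ≤ i → i < j → j ≤ n - 1 →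
      μ (e n i) (e n j) = ∑ p ∈ Delta n, a p.1 p.2 • psiCoef n p.1 p.2 i j)
    (q : Fin n) (hq : (q : ℕ) = 4) :
    μ (e n 1) (e n 2) q = a 1 4 := by
  rw [hμ5 1 2 le_rfl one_lt_two (by omega), Finset.sum_apply]
  rw [Finset.sum_eq_single_of_mem ((1, 4) : ℕ × ℕ)]
  · rw [Pi.smul_apply, psiCoef, if_pos ⟨le_rfl, le_rfl, one_lt_two, by omega, by omega⟩]
    norm_num [e_apply, hq]
  · simp only [Delta, Finset.mem_filter, Finset.mem_product, Finset.mem_range]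
    exact ⟨⟨by omega, by omega⟩, Or.inl ⟨le_rfl, by norm_num, by omega⟩⟩
  · intro p hp hne
    rw [Pi.smul_apply, psiCoef]
    split_ifs with hc
    · have hp1 : p.1 = 1 := by omega
      have hp2 : p.2 ≠ 4 := fun h4 => hne (Prod.ext hp1 h4)
      rw [Pi.smul_apply, e_apply, if_neg (by omega), smul_zero, smul_zero]
    · rw [Pi.zero_apply, smul_zero]

lemma psi12 (hn : 9 ≤ n) {p : ℕ × ℕ} (hp : p ∈ Delta n) :
    psiCoef n p.1 p.2 1 2 = if p.1 = 1 then e n p.2 else 0 := by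
  obtain ⟨h1n, h2n, hd⟩ := mem_Delta hp
  have hs : p.2 ≤ n - 1 := by rcases hd with ⟨_, _, h⟩ | ⟨_, _, h⟩ <;> omega
  have hr : 1 ≤ p.1 := by
    rcases hd with ⟨h, _, _⟩ | ⟨_, h, _⟩ <;> omega
  by_cases h : p.1 = 1
  · rw [if_pos h, psiCoef, if_pos ⟨le_rfl, by omega, by omega, by omega, by omega⟩]
    have hidx : 1 + 2 + p.2 - 2 * p.1 - 1 = p.2 := by omega
    rw [hidx, h]
    norm_num
  · rw [if_neg h, psiCoef, if_neg (by omega)]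

lemma r1_ge4 (hn : 9 ≤ n) {p : ℕ × ℕ} (hp : p ∈ Delta n) (h1 : p.1 = 1) :
    4 ≤ p.2 ∧ p.2 ≤ n - 1 := by
  obtain ⟨h1n, h2n, hd⟩ := mem_Delta hp
  rcases hd with ⟨_, h, h'⟩ | ⟨_, h, h'⟩ <;> omega

end DiagAux
open DiagAux in
/-- if `a_{1,4} ≠ 0` then `m_{2,2} = m_{1,1}²` and `m_{i,i} = m_{1,1}^i`
for `1 ≤ i ≤ n-1`. -/
theorem diagonal_entries_a14 (n : ℕ) (hn : 9 ≤ n) (μ : Bil n) (a : ℕ → ℕ → ℂ)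
    (hμ : AdaptedForm n μ a) (ha14 : a 1 4 ≠ 0)
    (m : ℕ) (hm : m = n - 3 ∨ (Odd n ∧ m = n - 4))
    (φ : Bil n) (hφalt : IsAlt φ)
    (hφ : ∀ i j, i < j → j ≤ n - 1 → φ (e n i) (e n j) = psiCoef n 1 m i j)
    (t : ℂ) (g : V n ≃ₗ[ℂ] V n)
    (hg : ∀ X Y, g ((μ + t • φ) X Y) = μ (g X) (g Y)) :
    coord 1 (g (e n 1)) = (coord 0 (g (e n 0))) ^ 2 ∧
    ∀ i, 1 ≤ i → i ≤ n - 1 →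
      coord (i - 1) (g (e n (i - 1))) = (coord 0 (g (e n 0))) ^ i := by
  obtain ⟨halt, hjac, hmu3, hmu4, hmu5⟩ := hμ
  have hm5 : 5 ≤ m ∧ m ≤ n - 1 := by rcases hm with rfl | ⟨_, rfl⟩ <;> omega
  have h0n : 0 < n := by omega
  have h1n : 1 < n := by omega
  have h2n : 2 < n := by omega
  have h3n : 3 < n := by omega
  have h4n : 4 < n := by omega
  -- μ_t(e₀, e_i) = e_{i+1} transported by g
  have hphi0 : ∀ i : ℕ, 1 ≤ i → i ≤ n - 1 → φ (e n 0) (e n i) = 0 := by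
    intro i h1 h2
    rw [hφ 0 i (by omega) h2, psiCoef, if_neg (by omega)]
  have ge_succ : ∀ i : ℕ, 1 ≤ i → i ≤ n - 2 →
      g (e n (i + 1)) = μ (g (e n 0)) (g (e n i)) := by
    intro i h1 h2
    have h := hg (e n 0) (e n i)
    rwa [LinearMap.add_apply, LinearMap.add_apply, LinearMap.smul_apply, LinearMap.smul_apply,
      hphi0 i h1 (by omega), smul_zero, add_zero, hmu3 i h1 h2] at h
  have ge2 : g (e n 2) = μ (g (e n 0)) (g (e n 1)) := by
    have := ge_succ 1 le_rfl (by omega); norm_num at this; exact this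
  -- triangularity
  have T : ∀ i, 2 ≤ i → i ≤ n - 1 → ∀ q : Fin n, (q : ℕ) < i → g (e n i) q = 0 := by
    intro i hi
    induction i, hi using Nat.le_induction with
    | base =>
      intro _ q hq
      rw [ge2, mu_expand]
      refine Finset.sum_eq_zero fun k _ => Finset.sum_eq_zero fun l _ => ?_
      rcases Nat.eq_zero_or_pos (l : ℕ) with hl | hl
      · rcases Nat.eq_zero_or_pos (k : ℕ) with hk | hk
        · rw [show e n (l : ℕ) = e n (k : ℕ) from by rw [hk, hl], halt (e n (k : ℕ)),
            Pi.zero_apply, mul_zero]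
        · rw [show e n (l : ℕ) = e n 0 from by rw [hl], mu_antisym halt, Pi.neg_apply,
            mu0c halt hmu3 hmu4 k k.isLt q, if_neg (by omega), neg_zero, mul_zero]
      · rcases Nat.eq_zero_or_pos (k : ℕ) with hk | hk
        · rw [show e n (k : ℕ) = e n 0 from by rw [hk], mu0c halt hmu3 hmu4 l l.isLt q,
            if_neg (by omega), mul_zero]
        · rw [CV halt hmu5 k l hk hl k.isLt l.isLt q (by omega), mul_zero]
    | succ i hi2 ih =>
      intro hin q hq
      rw [ge_succ i (by omega) (by omega), mu_expand]
      refine Finset.sum_eq_zero fun k _ => Finset.sum_eq_zero fun l _ => ?_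
      rcases Nat.lt_or_ge (l : ℕ) i with hl | hl
      · rw [ih (by omega) l hl]; ring
      · rcases Nat.eq_zero_or_pos (k : ℕ) with hk | hk
        · rw [show e n (k : ℕ) = e n 0 from by rw [hk], mu0c halt hmu3 hmu4 l l.isLt q,
            if_neg (by omega), mul_zero]
        · rw [CV halt hmu5 k l hk (by omega) k.isLt l.isLt q (by omega), mul_zero]
  -- nonvanishing of the (2,2) entry
  have hD2 : coord 2 (g (e n 2)) ≠ 0 := by
    rw [coord_eq 2 h2n]
    intro h0
    have Q : ∀ j, 2 ≤ j → j ≤ n - 1 → ∀ q : Fin n, (q : ℕ) ≤ j → g (e n j) q = 0 := by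
      intro j hj
      induction j, hj using Nat.le_induction with
      | base =>
        intro _ q hq
        rcases Nat.lt_or_ge (q : ℕ) 2 with h | h
        · exact T 2 le_rfl (by omega) q h
        · have hq2 : q = (⟨2, h2n⟩ : Fin n) := Fin.ext (show (q : ℕ) = 2 by omega)
          rw [hq2]; exact h0
      | succ j hj2 ih =>
        intro hjn q hq
        rw [ge_succ j (by omega) (by omega), mu_expand]
        refine Finset.sum_eq_zero fun k _ => Finset.sum_eq_zero fun l _ => ?_
        rcases Nat.lt_or_ge (l : ℕ) (j + 1) with hl | hl
        · rw [ih (by omega) l (by omega)]; ring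
        · rcases Nat.eq_zero_or_pos (k : ℕ) with hk | hk
          · rw [show e n (k : ℕ) = e n 0 from by rw [hk], mu0c halt hmu3 hmu4 l l.isLt q,
              if_neg (by omega), mul_zero]
          · rw [CV halt hmu5 k l hk (by omega) k.isLt l.isLt q (by omega), mul_zero]
    have hz : g (e n (n - 1)) = 0 :=
      funext fun q => Q (n - 1) (by omega) le_rfl q (by have := q.isLt; omega)
    have he0 : e n (n - 1) = 0 := g.injective (hz.trans (map_zero g).symm)
    have h1 : e n (n - 1) (⟨n - 1, by omega⟩ : Fin n) = 1 := by
      rw [e_apply, if_pos rfl]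
    rw [he0, Pi.zero_apply] at h1
    exact one_ne_zero h1.symm
  -- the transported equation for μ_t(e₁,e₂)
  have hphi12 : φ (e n 1) (e n 2) = e n m := by
    rw [hφ 1 2 one_lt_two (by omega), psiCoef,
      if_pos ⟨le_rfl, le_rfl, one_lt_two, by omega, by omega⟩]
    rw [show 1 + 2 + m - 2 * 1 - 1 = m from by omega]
    norm_num
  have geq12 : ∀ q : Fin n,
      (∑ p ∈ Delta n, a p.1 p.2 * (g (if p.1 = 1 then e n p.2 else 0)) q)
        + t * (g (e n m)) q = μ (g (e n 1)) (g (e n 2)) q := by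
    intro q
    have h := hg (e n 1) (e n 2)
    rw [LinearMap.add_apply, LinearMap.add_apply, LinearMap.smul_apply, LinearMap.smul_apply,
      hphi12, hmu5 1 2 le_rfl one_lt_two (by omega), map_add, map_smul, map_sum] at h
    have hψ : ∀ p ∈ Delta n, g (a p.1 p.2 • psiCoef n p.1 p.2 1 2)
        = a p.1 p.2 • g (if p.1 = 1 then e n p.2 else 0) := by
      intro p hp
      rw [map_smul, psi12 hn hp]
    rw [Finset.sum_congr rfl hψ] at h
    have h2 := congrFun h q
    simpa only [Pi.add_apply, Pi.smul_apply, smul_eq_mul, Finset.sum_apply] using h2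
  -- the (1,0) entry of g vanishes
  have hb0 : coord 0 (g (e n 1)) = 0 := by
    rw [coord_eq 0 h0n]
    have v3 : ((⟨3, h3n⟩ : Fin n) : ℕ) = 3 := rfl
    have h := geq12 ⟨3, h3n⟩
    have hL1 : (∑ p ∈ Delta n,
        a p.1 p.2 * (g (if p.1 = 1 then e n p.2 else 0)) (⟨3, h3n⟩ : Fin n)) = 0 := by
      refine Finset.sum_eq_zero fun p hp => ?_
      by_cases h1 : p.1 = 1
      · obtain ⟨h4, hn1⟩ := r1_ge4 hn hp h1
        rw [if_pos h1, T p.2 (by omega) hn1 ⟨3, h3n⟩ (by omega), mul_zero]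
      · rw [if_neg h1, map_zero, Pi.zero_apply, mul_zero]
    have hL2 : g (e n m) (⟨3, h3n⟩ : Fin n) = 0 :=
      T m (by omega) hm5.2 ⟨3, h3n⟩ (by omega)
    rw [hL1, hL2, mul_zero, add_zero] at h
    have hRHS : μ (g (e n 1)) (g (e n 2)) (⟨3, h3n⟩ : Fin n)
        = g (e n 1) (⟨0, h0n⟩ : Fin n) * g (e n 2) (⟨2, h2n⟩ : Fin n) := by
      rw [mu_expand, sum2_single _ (⟨0, h0n⟩ : Fin n) (⟨2, h2n⟩ : Fin n)]
      · show g (e n 1) ⟨0, h0n⟩ * g (e n 2) ⟨2, h2n⟩ * μ (e n 0) (e n 2) ⟨3, h3n⟩ = _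
        rw [mu0c halt hmu3 hmu4 2 h2n, if_pos ⟨v3.trans (by norm_num), by omega, by omega⟩,
          mul_one]
      · intro k l hne
        rcases Nat.lt_or_ge (l : ℕ) 2 with hl | hl
        · rw [T 2 le_rfl (by omega) l hl]; ring
        · rcases Nat.eq_zero_or_pos (k : ℕ) with hk | hk
          · have hl2 : (l : ℕ) ≠ 2 := fun h2 => hne ⟨Fin.ext hk, Fin.ext h2⟩
            rw [show e n (k : ℕ) = e n 0 from by rw [hk], mu0c halt hmu3 hmu4 l l.isLt,
              if_neg (by omega), mul_zero]
          · rw [CV halt hmu5 k l hk (by omega) k.isLt l.isLt _ (by omega), mul_zero]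
    rw [hRHS] at h
    exact (mul_eq_zero.mp h.symm).resolve_right (by rw [coord_eq 2 h2n] at hD2; exact hD2)
  -- the (2,2) entry in terms of the first two diagonal entries
  have hd2 : coord 2 (g (e n 2)) = coord 0 (g (e n 0)) * coord 1 (g (e n 1)) := by
    rw [coord_eq 2 h2n, coord_eq 0 h0n, coord_eq 1 h1n]
    have v2 : ((⟨2, h2n⟩ : Fin n) : ℕ) = 2 := rfl
    rw [ge2, mu_expand, sum2_single _ (⟨0, h0n⟩ : Fin n) (⟨1, h1n⟩ : Fin n)]
    · show g (e n 0) ⟨0, h0n⟩ * g (e n 1) ⟨1, h1n⟩ * μ (e n 0) (e n 1) ⟨2, h2n⟩ = _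
      rw [mu0c halt hmu3 hmu4 1 h1n, if_pos ⟨v2.trans (by norm_num), by omega, by omega⟩, mul_one]
    · intro k l hne
      rcases Nat.eq_zero_or_pos (l : ℕ) with hl | hl
      · have : l = (⟨0, h0n⟩ : Fin n) := Fin.ext hl
        rw [this, ((coord_eq 0 h0n (g (e n 1))).symm.trans hb0)]
        ring
      · rcases Nat.eq_zero_or_pos (k : ℕ) with hk | hk
        · have hl1 : (l : ℕ) ≠ 1 := fun h1 => hne ⟨Fin.ext hk, Fin.ext h1⟩
          rw [show e n (k : ℕ) = e n 0 from by rw [hk], mu0c halt hmu3 hmu4 l l.isLt,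
            if_neg (by omega), mul_zero]
        · rw [CV halt hmu5 k l hk (by omega) k.isLt l.isLt _ (by omega), mul_zero]
  -- the diagonal recursion
  have hrec : ∀ j, 2 ≤ j → j ≤ n - 3 →
      coord (j + 1) (g (e n (j + 1))) = coord 0 (g (e n 0)) * coord j (g (e n j)) := by
    intro j hj2 hj3
    have hjn : j < n := by omega
    have hj1n : j + 1 < n := by omega
    rw [coord_eq (j + 1) hj1n, coord_eq 0 h0n, coord_eq j hjn]
    have vj : ((⟨j + 1, hj1n⟩ : Fin n) : ℕ) = j + 1 := rfl
    rw [ge_succ j (by omega) (by omega), mu_expand,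
      sum2_single _ (⟨0, h0n⟩ : Fin n) (⟨j, hjn⟩ : Fin n)]
    · show g (e n 0) ⟨0, h0n⟩ * g (e n j) ⟨j, hjn⟩ * μ (e n 0) (e n j) ⟨j + 1, hj1n⟩ = _
      rw [mu0c halt hmu3 hmu4 j hjn, if_pos ⟨vj, by omega, by omega⟩, mul_one]
    · intro k l hne
      rcases Nat.lt_or_ge (l : ℕ) j with hl | hl
      · rw [T j hj2 (by omega) l hl]; ring
      · rcases Nat.eq_zero_or_pos (k : ℕ) with hk | hk
        · have hlj : (l : ℕ) ≠ j := fun h1 => hne ⟨Fin.ext hk, Fin.ext h1⟩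
          rw [show e n (k : ℕ) = e n 0 from by rw [hk], mu0c halt hmu3 hmu4 l l.isLt,
            if_neg (by omega), mul_zero]
        · rw [CV halt hmu5 k l hk (by omega) k.isLt l.isLt _ (by omega), mul_zero]
  -- the key x₄-coefficient comparison
  have hkey : a 1 4 * coord 4 (g (e n 4))
      = coord 1 (g (e n 1)) * coord 2 (g (e n 2)) * a 1 4 := by
    rw [coord_eq 4 h4n, coord_eq 1 h1n, coord_eq 2 h2n]
    have v4 : ((⟨4, h4n⟩ : Fin n) : ℕ) = 4 := rfl
    have h := geq12 ⟨4, h4n⟩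
    have hL1 : (∑ p ∈ Delta n,
        a p.1 p.2 * (g (if p.1 = 1 then e n p.2 else 0)) (⟨4, h4n⟩ : Fin n))
        = a 1 4 * g (e n 4) (⟨4, h4n⟩ : Fin n) := by
      rw [Finset.sum_eq_single_of_mem ((1, 4) : ℕ × ℕ)]
      · rw [if_pos rfl]
      · simp only [Delta, Finset.mem_filter, Finset.mem_product, Finset.mem_range]
        exact ⟨⟨by omega, by omega⟩, Or.inl ⟨le_rfl, by norm_num, by omega⟩⟩
      · intro p hp hne
        by_cases h1 : p.1 = 1
        · obtain ⟨h4, hn1⟩ := r1_ge4 hn hp h1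
          have hp2 : p.2 ≠ 4 := fun hq => hne (Prod.ext h1 hq)
          rw [if_pos h1, T p.2 (by omega) hn1 ⟨4, h4n⟩ (by omega), mul_zero]
        · rw [if_neg h1, map_zero, Pi.zero_apply, mul_zero]
    have hL2 : g (e n m) (⟨4, h4n⟩ : Fin n) = 0 :=
      T m (by omega) hm5.2 ⟨4, h4n⟩ (by omega)
    rw [hL1, hL2, mul_zero, add_zero] at h
    have hRHS : μ (g (e n 1)) (g (e n 2)) (⟨4, h4n⟩ : Fin n)
        = g (e n 1) (⟨1, h1n⟩ : Fin n) * g (e n 2) (⟨2, h2n⟩ : Fin n) * a 1 4 := by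
      rw [mu_expand, sum2_single _ (⟨1, h1n⟩ : Fin n) (⟨2, h2n⟩ : Fin n)]
      · show g (e n 1) ⟨1, h1n⟩ * g (e n 2) ⟨2, h2n⟩ * μ (e n 1) (e n 2) ⟨4, h4n⟩ = _
        rw [E14 hn hmu5 ⟨4, h4n⟩ v4]
      · intro k l hne
        rcases Nat.lt_or_ge (l : ℕ) 2 with hl | hl
        · rw [T 2 le_rfl (by omega) l hl]; ring
        · rcases Nat.eq_zero_or_pos (k : ℕ) with hk | hk
          · have : k = (⟨0, h0n⟩ : Fin n) := Fin.ext hk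
            rw [this, ((coord_eq 0 h0n (g (e n 1))).symm.trans hb0)]
            ring
          · have hkl : ¬((k : ℕ) = 1 ∧ (l : ℕ) = 2) :=
              fun hc => hne ⟨Fin.ext hc.1, Fin.ext hc.2⟩
            rw [CV halt hmu5 k l hk (by omega) k.isLt l.isLt _ (by omega), mul_zero]
    rw [hRHS] at h
    rw [← h]
  -- conclusion
  have hb1 : coord 1 (g (e n 1)) = (coord 0 (g (e n 0))) ^ 2 := by
    have h3 : coord 3 (g (e n 3)) = coord 0 (g (e n 0)) * coord 2 (g (e n 2)) := by
      have := hrec 2 le_rfl (by omega); norm_num at this; exact this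
    have h4 : coord 4 (g (e n 4)) = coord 0 (g (e n 0)) * coord 3 (g (e n 3)) := by
      have := hrec 3 (by omega) (by omega); norm_num at this; exact this
    have hcan : coord 0 (g (e n 0)) ^ 2 * (coord 2 (g (e n 2)) * a 1 4)
        = coord 1 (g (e n 1)) * (coord 2 (g (e n 2)) * a 1 4) := by
      rw [h4, h3] at hkey
      linear_combination hkey
    exact (mul_right_cancel₀ (mul_ne_zero hD2 ha14) hcan).symm
  refine ⟨hb1, ?_⟩
  have AUX : ∀ j, j ≤ n - 2 → coord j (g (e n j)) = (coord 0 (g (e n 0))) ^ (j + 1) := by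
    intro j
    induction j with
    | zero => intro _; rw [pow_one]
    | succ j ih =>
      intro hj
      match j, ih with
      | 0, _ => simpa using hb1
      | 1, _ =>
        rw [show (1 + 1 : ℕ) = 2 from rfl, hd2, hb1]; ring
      | (j + 2), ih =>
        rw [hrec (j + 2) (by omega) (by omega), ih (by omega)]
        ring
  intro i h1 h2
  rw [AUX (i - 1) (by omega), show i - 1 + 1 = i from by omega]
end
end

section
/- Let μ be a filiform Lie algebra of dimension 9 from the open set U⁹ = {a_{1,4}≠0, a_{1,5}≠0, 3a_{2,6}a_{1,5}(a_{1,4}−a_{2,6}) ≠ 2a_{2,7}a_{1,4}², 2a_{2,6}−a_{1,4}≠0, a_{3,8}≠0} of the variety 𝓕⁹. Then the filiform Lie bracket μ_t = μ + tψ_{1,6} is isomorphic to μ only if t = 0. -/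
open scoped BigOperators

noncomputable section

set_option linter.unreachableTactic false
set_option linter.unusedTactic false

private lemma DeltaNine : Delta 9 = {(1,4),(1,5),(1,6),(1,7),(1,8),(2,6),(2,7),(2,8),(3,8)} := by
  decide

private lemma sum_DeltaNine {M : Type*} [AddCommMonoid M] (f : ℕ × ℕ → M) :
    ∑ p ∈ Delta 9, f p = f (1,4) + f (1,5) + f (1,6) + f (1,7) + f (1,8) + f (2,6) + f (2,7)
      + f (2,8) + f (3,8) := by
  rw [DeltaNine, Finset.sum_insert (by decide), Finset.sum_insert (by decide),
    Finset.sum_insert (by decide), Finset.sum_insert (by decide), Finset.sum_insert (by decide),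
    Finset.sum_insert (by decide), Finset.sum_insert (by decide), Finset.sum_insert (by decide),
    Finset.sum_singleton]
  abel

private lemma expand9 (X : V 9) : X = X 0 • e 9 0 + X 1 • e 9 1 + X 2 • e 9 2 + X 3 • e 9 3
    + X 4 • e 9 4 + X 5 • e 9 5 + X 6 • e 9 6 + X 7 • e 9 7 + X 8 • e 9 8 := by
  funext i; fin_cases i <;> simp [e, Pi.single_apply]

private lemma mu_anti (μ : Bil 9) (a : ℕ → ℕ → ℂ) (hμ : AdaptedForm 9 μ a) (A B : V 9) :
    μ B A = -μ A B := by
  have h := hμ.1 (A + B)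
  simp only [map_add, LinearMap.add_apply, hμ.1 A, hμ.1 B, zero_add, add_zero] at h
  linear_combination (norm := module) h

private lemma mu01 (μ : Bil 9) (a : ℕ → ℕ → ℂ) (hμ : AdaptedForm 9 μ a) :
    μ (e 9 0) (e 9 1) = e 9 2 := by
  exact hμ.2.2.1 1 (by norm_num) (by norm_num)

private lemma mu02 (μ : Bil 9) (a : ℕ → ℕ → ℂ) (hμ : AdaptedForm 9 μ a) :
    μ (e 9 0) (e 9 2) = e 9 3 := by
  exact hμ.2.2.1 2 (by norm_num) (by norm_num)

private lemma mu03 (μ : Bil 9) (a : ℕ → ℕ → ℂ) (hμ : AdaptedForm 9 μ a) :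
    μ (e 9 0) (e 9 3) = e 9 4 := by
  exact hμ.2.2.1 3 (by norm_num) (by norm_num)

private lemma mu04 (μ : Bil 9) (a : ℕ → ℕ → ℂ) (hμ : AdaptedForm 9 μ a) :
    μ (e 9 0) (e 9 4) = e 9 5 := by
  exact hμ.2.2.1 4 (by norm_num) (by norm_num)

private lemma mu05 (μ : Bil 9) (a : ℕ → ℕ → ℂ) (hμ : AdaptedForm 9 μ a) :
    μ (e 9 0) (e 9 5) = e 9 6 := by
  exact hμ.2.2.1 5 (by norm_num) (by norm_num)

private lemma mu06 (μ : Bil 9) (a : ℕ → ℕ → ℂ) (hμ : AdaptedForm 9 μ a) :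
    μ (e 9 0) (e 9 6) = e 9 7 := by
  exact hμ.2.2.1 6 (by norm_num) (by norm_num)

private lemma mu07 (μ : Bil 9) (a : ℕ → ℕ → ℂ) (hμ : AdaptedForm 9 μ a) :
    μ (e 9 0) (e 9 7) = e 9 8 := by
  exact hμ.2.2.1 7 (by norm_num) (by norm_num)

private lemma mu08 (μ : Bil 9) (a : ℕ → ℕ → ℂ) (hμ : AdaptedForm 9 μ a) :
    μ (e 9 0) (e 9 8) = (0 : V 9) := by
  exact hμ.2.2.2.1

private lemma mu12 (μ : Bil 9) (a : ℕ → ℕ → ℂ) (hμ : AdaptedForm 9 μ a) :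
    μ (e 9 1) (e 9 2) = (a 1 4) • e 9 4 + (a 1 5) • e 9 5 + (a 1 6) • e 9 6 + (a 1 7) • e 9 7 + (a 1 8) • e 9 8 := by
  rw [hμ.2.2.2.2 1 2 (by norm_num) (by norm_num) (by norm_num), sum_DeltaNine]
  norm_num [psiCoef]
  try module

private lemma mu13 (μ : Bil 9) (a : ℕ → ℕ → ℂ) (hμ : AdaptedForm 9 μ a) :
    μ (e 9 1) (e 9 3) = (a 1 4) • e 9 5 + (a 1 5) • e 9 6 + (a 1 6) • e 9 7 + (a 1 7) • e 9 8 := by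
  rw [hμ.2.2.2.2 1 3 (by norm_num) (by norm_num) (by norm_num), sum_DeltaNine]
  norm_num [psiCoef]
  try module

private lemma mu14 (μ : Bil 9) (a : ℕ → ℕ → ℂ) (hμ : AdaptedForm 9 μ a) :
    μ (e 9 1) (e 9 4) = (a 1 4 - a 2 6) • e 9 6 + (a 1 5 - a 2 7) • e 9 7 + (a 1 6 - a 2 8) • e 9 8 := by
  rw [hμ.2.2.2.2 1 4 (by norm_num) (by norm_num) (by norm_num), sum_DeltaNine]
  norm_num [psiCoef]
  try module

private lemma mu15 (μ : Bil 9) (a : ℕ → ℕ → ℂ) (hμ : AdaptedForm 9 μ a) :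
    μ (e 9 1) (e 9 5) = (a 1 4 - 2*a 2 6) • e 9 7 + (a 1 5 - 2*a 2 7) • e 9 8 := by
  rw [hμ.2.2.2.2 1 5 (by norm_num) (by norm_num) (by norm_num), sum_DeltaNine]
  norm_num [psiCoef]
  try module

private lemma mu16 (μ : Bil 9) (a : ℕ → ℕ → ℂ) (hμ : AdaptedForm 9 μ a) :
    μ (e 9 1) (e 9 6) = (a 1 4 - 3*a 2 6 + a 3 8) • e 9 8 := by
  rw [hμ.2.2.2.2 1 6 (by norm_num) (by norm_num) (by norm_num), sum_DeltaNine]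
  norm_num [psiCoef]
  try module

private lemma mu17 (μ : Bil 9) (a : ℕ → ℕ → ℂ) (hμ : AdaptedForm 9 μ a) :
    μ (e 9 1) (e 9 7) = (0 : V 9) := by
  rw [hμ.2.2.2.2 1 7 (by norm_num) (by norm_num) (by norm_num), sum_DeltaNine]
  norm_num [psiCoef]
  try module

private lemma mu18 (μ : Bil 9) (a : ℕ → ℕ → ℂ) (hμ : AdaptedForm 9 μ a) :
    μ (e 9 1) (e 9 8) = (0 : V 9) := by
  rw [hμ.2.2.2.2 1 8 (by norm_num) (by norm_num) (by norm_num), sum_DeltaNine]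
  norm_num [psiCoef]
  try module

private lemma mu23 (μ : Bil 9) (a : ℕ → ℕ → ℂ) (hμ : AdaptedForm 9 μ a) :
    μ (e 9 2) (e 9 3) = (a 2 6) • e 9 6 + (a 2 7) • e 9 7 + (a 2 8) • e 9 8 := by
  rw [hμ.2.2.2.2 2 3 (by norm_num) (by norm_num) (by norm_num), sum_DeltaNine]
  norm_num [psiCoef]
  try module

private lemma mu24 (μ : Bil 9) (a : ℕ → ℕ → ℂ) (hμ : AdaptedForm 9 μ a) :
    μ (e 9 2) (e 9 4) = (a 2 6) • e 9 7 + (a 2 7) • e 9 8 := by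
  rw [hμ.2.2.2.2 2 4 (by norm_num) (by norm_num) (by norm_num), sum_DeltaNine]
  norm_num [psiCoef]
  try module

private lemma mu25 (μ : Bil 9) (a : ℕ → ℕ → ℂ) (hμ : AdaptedForm 9 μ a) :
    μ (e 9 2) (e 9 5) = (a 2 6 - a 3 8) • e 9 8 := by
  rw [hμ.2.2.2.2 2 5 (by norm_num) (by norm_num) (by norm_num), sum_DeltaNine]
  norm_num [psiCoef]
  try module

private lemma mu26 (μ : Bil 9) (a : ℕ → ℕ → ℂ) (hμ : AdaptedForm 9 μ a) :
    μ (e 9 2) (e 9 6) = (0 : V 9) := by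
  rw [hμ.2.2.2.2 2 6 (by norm_num) (by norm_num) (by norm_num), sum_DeltaNine]
  norm_num [psiCoef]
  try module

private lemma mu27 (μ : Bil 9) (a : ℕ → ℕ → ℂ) (hμ : AdaptedForm 9 μ a) :
    μ (e 9 2) (e 9 7) = (0 : V 9) := by
  rw [hμ.2.2.2.2 2 7 (by norm_num) (by norm_num) (by norm_num), sum_DeltaNine]
  norm_num [psiCoef]
  try module

private lemma mu28 (μ : Bil 9) (a : ℕ → ℕ → ℂ) (hμ : AdaptedForm 9 μ a) :
    μ (e 9 2) (e 9 8) = (0 : V 9) := by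
  rw [hμ.2.2.2.2 2 8 (by norm_num) (by norm_num) (by norm_num), sum_DeltaNine]
  norm_num [psiCoef]
  try module

private lemma mu34 (μ : Bil 9) (a : ℕ → ℕ → ℂ) (hμ : AdaptedForm 9 μ a) :
    μ (e 9 3) (e 9 4) = (a 3 8) • e 9 8 := by
  rw [hμ.2.2.2.2 3 4 (by norm_num) (by norm_num) (by norm_num), sum_DeltaNine]
  norm_num [psiCoef]
  try module

private lemma mu35 (μ : Bil 9) (a : ℕ → ℕ → ℂ) (hμ : AdaptedForm 9 μ a) :
    μ (e 9 3) (e 9 5) = (0 : V 9) := by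
  rw [hμ.2.2.2.2 3 5 (by norm_num) (by norm_num) (by norm_num), sum_DeltaNine]
  norm_num [psiCoef]
  try module

private lemma mu36 (μ : Bil 9) (a : ℕ → ℕ → ℂ) (hμ : AdaptedForm 9 μ a) :
    μ (e 9 3) (e 9 6) = (0 : V 9) := by
  rw [hμ.2.2.2.2 3 6 (by norm_num) (by norm_num) (by norm_num), sum_DeltaNine]
  norm_num [psiCoef]
  try module

private lemma mu37 (μ : Bil 9) (a : ℕ → ℕ → ℂ) (hμ : AdaptedForm 9 μ a) :
    μ (e 9 3) (e 9 7) = (0 : V 9) := by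
  rw [hμ.2.2.2.2 3 7 (by norm_num) (by norm_num) (by norm_num), sum_DeltaNine]
  norm_num [psiCoef]
  try module

private lemma mu38 (μ : Bil 9) (a : ℕ → ℕ → ℂ) (hμ : AdaptedForm 9 μ a) :
    μ (e 9 3) (e 9 8) = (0 : V 9) := by
  rw [hμ.2.2.2.2 3 8 (by norm_num) (by norm_num) (by norm_num), sum_DeltaNine]
  norm_num [psiCoef]
  try module

private lemma mu45 (μ : Bil 9) (a : ℕ → ℕ → ℂ) (hμ : AdaptedForm 9 μ a) :
    μ (e 9 4) (e 9 5) = (0 : V 9) := by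
  rw [hμ.2.2.2.2 4 5 (by norm_num) (by norm_num) (by norm_num), sum_DeltaNine]
  norm_num [psiCoef]
  try module

private lemma mu46 (μ : Bil 9) (a : ℕ → ℕ → ℂ) (hμ : AdaptedForm 9 μ a) :
    μ (e 9 4) (e 9 6) = (0 : V 9) := by
  rw [hμ.2.2.2.2 4 6 (by norm_num) (by norm_num) (by norm_num), sum_DeltaNine]
  norm_num [psiCoef]
  try module

private lemma mu47 (μ : Bil 9) (a : ℕ → ℕ → ℂ) (hμ : AdaptedForm 9 μ a) :
    μ (e 9 4) (e 9 7) = (0 : V 9) := by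
  rw [hμ.2.2.2.2 4 7 (by norm_num) (by norm_num) (by norm_num), sum_DeltaNine]
  norm_num [psiCoef]
  try module

private lemma mu48 (μ : Bil 9) (a : ℕ → ℕ → ℂ) (hμ : AdaptedForm 9 μ a) :
    μ (e 9 4) (e 9 8) = (0 : V 9) := by
  rw [hμ.2.2.2.2 4 8 (by norm_num) (by norm_num) (by norm_num), sum_DeltaNine]
  norm_num [psiCoef]
  try module

private lemma mu56 (μ : Bil 9) (a : ℕ → ℕ → ℂ) (hμ : AdaptedForm 9 μ a) :
    μ (e 9 5) (e 9 6) = (0 : V 9) := by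
  rw [hμ.2.2.2.2 5 6 (by norm_num) (by norm_num) (by norm_num), sum_DeltaNine]
  norm_num [psiCoef]
  try module

private lemma mu57 (μ : Bil 9) (a : ℕ → ℕ → ℂ) (hμ : AdaptedForm 9 μ a) :
    μ (e 9 5) (e 9 7) = (0 : V 9) := by
  rw [hμ.2.2.2.2 5 7 (by norm_num) (by norm_num) (by norm_num), sum_DeltaNine]
  norm_num [psiCoef]
  try module

private lemma mu58 (μ : Bil 9) (a : ℕ → ℕ → ℂ) (hμ : AdaptedForm 9 μ a) :
    μ (e 9 5) (e 9 8) = (0 : V 9) := by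
  rw [hμ.2.2.2.2 5 8 (by norm_num) (by norm_num) (by norm_num), sum_DeltaNine]
  norm_num [psiCoef]
  try module

private lemma mu67 (μ : Bil 9) (a : ℕ → ℕ → ℂ) (hμ : AdaptedForm 9 μ a) :
    μ (e 9 6) (e 9 7) = (0 : V 9) := by
  rw [hμ.2.2.2.2 6 7 (by norm_num) (by norm_num) (by norm_num), sum_DeltaNine]
  norm_num [psiCoef]
  try module

private lemma mu68 (μ : Bil 9) (a : ℕ → ℕ → ℂ) (hμ : AdaptedForm 9 μ a) :
    μ (e 9 6) (e 9 8) = (0 : V 9) := by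
  rw [hμ.2.2.2.2 6 8 (by norm_num) (by norm_num) (by norm_num), sum_DeltaNine]
  norm_num [psiCoef]
  try module

private lemma mu78 (μ : Bil 9) (a : ℕ → ℕ → ℂ) (hμ : AdaptedForm 9 μ a) :
    μ (e 9 7) (e 9 8) = (0 : V 9) := by
  rw [hμ.2.2.2.2 7 8 (by norm_num) (by norm_num) (by norm_num), sum_DeltaNine]
  norm_num [psiCoef]
  try module

private lemma mu10 (μ : Bil 9) (a : ℕ → ℕ → ℂ) (hμ : AdaptedForm 9 μ a) :
    μ (e 9 1) (e 9 0) = -(e 9 2) := by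
  rw [mu_anti μ a hμ, mu01 μ a hμ]

private lemma mu20 (μ : Bil 9) (a : ℕ → ℕ → ℂ) (hμ : AdaptedForm 9 μ a) :
    μ (e 9 2) (e 9 0) = -(e 9 3) := by
  rw [mu_anti μ a hμ, mu02 μ a hμ]

private lemma mu30 (μ : Bil 9) (a : ℕ → ℕ → ℂ) (hμ : AdaptedForm 9 μ a) :
    μ (e 9 3) (e 9 0) = -(e 9 4) := by
  rw [mu_anti μ a hμ, mu03 μ a hμ]

private lemma mu40 (μ : Bil 9) (a : ℕ → ℕ → ℂ) (hμ : AdaptedForm 9 μ a) :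
    μ (e 9 4) (e 9 0) = -(e 9 5) := by
  rw [mu_anti μ a hμ, mu04 μ a hμ]

private lemma mu50 (μ : Bil 9) (a : ℕ → ℕ → ℂ) (hμ : AdaptedForm 9 μ a) :
    μ (e 9 5) (e 9 0) = -(e 9 6) := by
  rw [mu_anti μ a hμ, mu05 μ a hμ]

private lemma mu60 (μ : Bil 9) (a : ℕ → ℕ → ℂ) (hμ : AdaptedForm 9 μ a) :
    μ (e 9 6) (e 9 0) = -(e 9 7) := by
  rw [mu_anti μ a hμ, mu06 μ a hμ]

private lemma mu70 (μ : Bil 9) (a : ℕ → ℕ → ℂ) (hμ : AdaptedForm 9 μ a) :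
    μ (e 9 7) (e 9 0) = -(e 9 8) := by
  rw [mu_anti μ a hμ, mu07 μ a hμ]

private lemma mu80 (μ : Bil 9) (a : ℕ → ℕ → ℂ) (hμ : AdaptedForm 9 μ a) :
    μ (e 9 8) (e 9 0) = -((0 : V 9)) := by
  rw [mu_anti μ a hμ, mu08 μ a hμ]

private lemma mu21 (μ : Bil 9) (a : ℕ → ℕ → ℂ) (hμ : AdaptedForm 9 μ a) :
    μ (e 9 2) (e 9 1) = -((a 1 4) • e 9 4 + (a 1 5) • e 9 5 + (a 1 6) • e 9 6 + (a 1 7) • e 9 7 + (a 1 8) • e 9 8) := by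
  rw [mu_anti μ a hμ, mu12 μ a hμ]

private lemma mu31 (μ : Bil 9) (a : ℕ → ℕ → ℂ) (hμ : AdaptedForm 9 μ a) :
    μ (e 9 3) (e 9 1) = -((a 1 4) • e 9 5 + (a 1 5) • e 9 6 + (a 1 6) • e 9 7 + (a 1 7) • e 9 8) := by
  rw [mu_anti μ a hμ, mu13 μ a hμ]

private lemma mu41 (μ : Bil 9) (a : ℕ → ℕ → ℂ) (hμ : AdaptedForm 9 μ a) :
    μ (e 9 4) (e 9 1) = -((a 1 4 - a 2 6) • e 9 6 + (a 1 5 - a 2 7) • e 9 7 + (a 1 6 - a 2 8) • e 9 8) := by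
  rw [mu_anti μ a hμ, mu14 μ a hμ]

private lemma mu51 (μ : Bil 9) (a : ℕ → ℕ → ℂ) (hμ : AdaptedForm 9 μ a) :
    μ (e 9 5) (e 9 1) = -((a 1 4 - 2*a 2 6) • e 9 7 + (a 1 5 - 2*a 2 7) • e 9 8) := by
  rw [mu_anti μ a hμ, mu15 μ a hμ]

private lemma mu61 (μ : Bil 9) (a : ℕ → ℕ → ℂ) (hμ : AdaptedForm 9 μ a) :
    μ (e 9 6) (e 9 1) = -((a 1 4 - 3*a 2 6 + a 3 8) • e 9 8) := by
  rw [mu_anti μ a hμ, mu16 μ a hμ]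

private lemma mu71 (μ : Bil 9) (a : ℕ → ℕ → ℂ) (hμ : AdaptedForm 9 μ a) :
    μ (e 9 7) (e 9 1) = -((0 : V 9)) := by
  rw [mu_anti μ a hμ, mu17 μ a hμ]

private lemma mu81 (μ : Bil 9) (a : ℕ → ℕ → ℂ) (hμ : AdaptedForm 9 μ a) :
    μ (e 9 8) (e 9 1) = -((0 : V 9)) := by
  rw [mu_anti μ a hμ, mu18 μ a hμ]

private lemma mu32 (μ : Bil 9) (a : ℕ → ℕ → ℂ) (hμ : AdaptedForm 9 μ a) :
    μ (e 9 3) (e 9 2) = -((a 2 6) • e 9 6 + (a 2 7) • e 9 7 + (a 2 8) • e 9 8) := by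
  rw [mu_anti μ a hμ, mu23 μ a hμ]

private lemma mu42 (μ : Bil 9) (a : ℕ → ℕ → ℂ) (hμ : AdaptedForm 9 μ a) :
    μ (e 9 4) (e 9 2) = -((a 2 6) • e 9 7 + (a 2 7) • e 9 8) := by
  rw [mu_anti μ a hμ, mu24 μ a hμ]

private lemma mu52 (μ : Bil 9) (a : ℕ → ℕ → ℂ) (hμ : AdaptedForm 9 μ a) :
    μ (e 9 5) (e 9 2) = -((a 2 6 - a 3 8) • e 9 8) := by
  rw [mu_anti μ a hμ, mu25 μ a hμ]

private lemma mu62 (μ : Bil 9) (a : ℕ → ℕ → ℂ) (hμ : AdaptedForm 9 μ a) :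
    μ (e 9 6) (e 9 2) = -((0 : V 9)) := by
  rw [mu_anti μ a hμ, mu26 μ a hμ]

private lemma mu72 (μ : Bil 9) (a : ℕ → ℕ → ℂ) (hμ : AdaptedForm 9 μ a) :
    μ (e 9 7) (e 9 2) = -((0 : V 9)) := by
  rw [mu_anti μ a hμ, mu27 μ a hμ]

private lemma mu82 (μ : Bil 9) (a : ℕ → ℕ → ℂ) (hμ : AdaptedForm 9 μ a) :
    μ (e 9 8) (e 9 2) = -((0 : V 9)) := by
  rw [mu_anti μ a hμ, mu28 μ a hμ]

private lemma mu43 (μ : Bil 9) (a : ℕ → ℕ → ℂ) (hμ : AdaptedForm 9 μ a) :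
    μ (e 9 4) (e 9 3) = -((a 3 8) • e 9 8) := by
  rw [mu_anti μ a hμ, mu34 μ a hμ]

private lemma mu53 (μ : Bil 9) (a : ℕ → ℕ → ℂ) (hμ : AdaptedForm 9 μ a) :
    μ (e 9 5) (e 9 3) = -((0 : V 9)) := by
  rw [mu_anti μ a hμ, mu35 μ a hμ]

private lemma mu63 (μ : Bil 9) (a : ℕ → ℕ → ℂ) (hμ : AdaptedForm 9 μ a) :
    μ (e 9 6) (e 9 3) = -((0 : V 9)) := by
  rw [mu_anti μ a hμ, mu36 μ a hμ]

private lemma mu73 (μ : Bil 9) (a : ℕ → ℕ → ℂ) (hμ : AdaptedForm 9 μ a) :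
    μ (e 9 7) (e 9 3) = -((0 : V 9)) := by
  rw [mu_anti μ a hμ, mu37 μ a hμ]

private lemma mu83 (μ : Bil 9) (a : ℕ → ℕ → ℂ) (hμ : AdaptedForm 9 μ a) :
    μ (e 9 8) (e 9 3) = -((0 : V 9)) := by
  rw [mu_anti μ a hμ, mu38 μ a hμ]

private lemma mu54 (μ : Bil 9) (a : ℕ → ℕ → ℂ) (hμ : AdaptedForm 9 μ a) :
    μ (e 9 5) (e 9 4) = -((0 : V 9)) := by
  rw [mu_anti μ a hμ, mu45 μ a hμ]

private lemma mu64 (μ : Bil 9) (a : ℕ → ℕ → ℂ) (hμ : AdaptedForm 9 μ a) :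
    μ (e 9 6) (e 9 4) = -((0 : V 9)) := by
  rw [mu_anti μ a hμ, mu46 μ a hμ]

private lemma mu74 (μ : Bil 9) (a : ℕ → ℕ → ℂ) (hμ : AdaptedForm 9 μ a) :
    μ (e 9 7) (e 9 4) = -((0 : V 9)) := by
  rw [mu_anti μ a hμ, mu47 μ a hμ]

private lemma mu84 (μ : Bil 9) (a : ℕ → ℕ → ℂ) (hμ : AdaptedForm 9 μ a) :
    μ (e 9 8) (e 9 4) = -((0 : V 9)) := by
  rw [mu_anti μ a hμ, mu48 μ a hμ]

private lemma mu65 (μ : Bil 9) (a : ℕ → ℕ → ℂ) (hμ : AdaptedForm 9 μ a) :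
    μ (e 9 6) (e 9 5) = -((0 : V 9)) := by
  rw [mu_anti μ a hμ, mu56 μ a hμ]

private lemma mu75 (μ : Bil 9) (a : ℕ → ℕ → ℂ) (hμ : AdaptedForm 9 μ a) :
    μ (e 9 7) (e 9 5) = -((0 : V 9)) := by
  rw [mu_anti μ a hμ, mu57 μ a hμ]

private lemma mu85 (μ : Bil 9) (a : ℕ → ℕ → ℂ) (hμ : AdaptedForm 9 μ a) :
    μ (e 9 8) (e 9 5) = -((0 : V 9)) := by
  rw [mu_anti μ a hμ, mu58 μ a hμ]

private lemma mu76 (μ : Bil 9) (a : ℕ → ℕ → ℂ) (hμ : AdaptedForm 9 μ a) :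
    μ (e 9 7) (e 9 6) = -((0 : V 9)) := by
  rw [mu_anti μ a hμ, mu67 μ a hμ]

private lemma mu86 (μ : Bil 9) (a : ℕ → ℕ → ℂ) (hμ : AdaptedForm 9 μ a) :
    μ (e 9 8) (e 9 6) = -((0 : V 9)) := by
  rw [mu_anti μ a hμ, mu68 μ a hμ]

private lemma mu87 (μ : Bil 9) (a : ℕ → ℕ → ℂ) (hμ : AdaptedForm 9 μ a) :
    μ (e 9 8) (e 9 7) = -((0 : V 9)) := by
  rw [mu_anti μ a hμ, mu78 μ a hμ]

set_option maxHeartbeats 2000000 in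
private lemma mu_master (μ : Bil 9) (a : ℕ → ℕ → ℂ) (hμ : AdaptedForm 9 μ a) (X Y : V 9) :
    μ X Y = (X 0 * Y 1 - X 1 * Y 0) • e 9 2 + (X 0 * Y 2 - X 2 * Y 0) • e 9 3 + (a 1 4 * X 1 * Y 2 - a 1 4 * X 2 * Y 1 + X 0 * Y 3 - X 3 * Y 0) • e 9 4 + (a 1 4 * X 1 * Y 3 - a 1 4 * X 3 * Y 1 + a 1 5 * X 1 * Y 2 - a 1 5 * X 2 * Y 1 + X 0 * Y 4 - X 4 * Y 0) • e 9 5 + (a 1 4 * X 1 * Y 4 - a 1 4 * X 4 * Y 1 + a 1 5 * X 1 * Y 3 - a 1 5 * X 3 * Y 1 + a 1 6 * X 1 * Y 2 - a 1 6 * X 2 * Y 1 - a 2 6 * X 1 * Y 4 + a 2 6 * X 2 * Y 3 - a 2 6 * X 3 * Y 2 + a 2 6 * X 4 * Y 1 + X 0 * Y 5 - X 5 * Y 0) • e 9 6 + (a 1 4 * X 1 * Y 5 - a 1 4 * X 5 * Y 1 + a 1 5 * X 1 * Y 4 - a 1 5 * X 4 * Y 1 + a 1 6 * X 1 * Y 3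 - a 1 6 * X 3 * Y 1 + a 1 7 * X 1 * Y 2 - a 1 7 * X 2 * Y 1 - 2 * a 2 6 * X 1 * Y 5 + a 2 6 * X 2 * Y 4 - a 2 6 * X 4 * Y 2 + 2 * a 2 6 * X 5 * Y 1 - a 2 7 * X 1 * Y 4 + a 2 7 * X 2 * Y 3 - a 2 7 * X 3 * Y 2 + a 2 7 * X 4 * Y 1 + X 0 * Y 6 - X 6 * Y 0) • e 9 7 + (a 1 4 * X 1 * Y 6 - a 1 4 * X 6 * Y 1 + a 1 5 * X 1 * Y 5 - a 1 5 * X 5 * Y 1 + a 1 6 * X 1 * Y 4 - a 1 6 * X 4 * Y 1 + a 1 7 * X 1 * Y 3 - a 1 7 * X 3 * Y 1 + a 1 8 * X 1 * Y 2 - a 1 8 * X 2 * Y 1 - 3 * a 2 6 * X 1 * Y 6 + a 2 6 * X 2 * Y 5 - a 2 6 * X 5 * Y 2 + 3 * a 2 6 * X 6 * Y 1 - 2 * a 2 7 * X 1 * Y 5 + a 2 7 * X 2 * Y 4 - a 2 7 * X 4 * Y 2 + 2 * a 2 7 * X 5 * Y 1 - a 2 8 * X 1 * Y 4 + a 2 8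 * X 2 * Y 3 - a 2 8 * X 3 * Y 2 + a 2 8 * X 4 * Y 1 + a 3 8 * X 1 * Y 6 - a 3 8 * X 2 * Y 5 + a 3 8 * X 3 * Y 4 - a 3 8 * X 4 * Y 3 + a 3 8 * X 5 * Y 2 - a 3 8 * X 6 * Y 1 + X 0 * Y 7 - X 7 * Y 0) • e 9 8 := by
  conv_lhs => rw [expand9 X, expand9 Y]
  simp only [map_add, map_smul, LinearMap.add_apply, LinearMap.smul_apply,
    mu01 μ a hμ, mu02 μ a hμ, mu03 μ a hμ, mu04 μ a hμ, mu05 μ a hμ, mu06 μ a hμ, mu07 μ a hμ, mu08 μ a hμ, mu10 μ a hμ, mu12 μ a hμ, mu13 μ a hμ, mu14 μ a hμ, mu15 μ a hμ, mu16 μ a hμ, mu17 μ a hμ, mu18 μ a hμ, mu20 μ a hμ, mu21 μ a hμ, mu23 μ a hμ, mu24 μ a hμ, mu25 μ a hμ, mu26 μ a hμ, mu27 μ a hμ, mu28 μ a hμ, mu30 μ a hμ, mu31 μ a hμ, mu32 μ a hμ, mu34 μ a hμ, mu35 μ a hμ, mu36 μ a hμ, mu37 μ a hμ, mu38 μ a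 hμ, mu40 μ a hμ, mu41 μ a hμ, mu42 μ a hμ, mu43 μ a hμ, mu45 μ a hμ, mu46 μ a hμ, mu47 μ a hμ, mu48 μ a hμ, mu50 μ a hμ, mu51 μ a hμ, mu52 μ a hμ, mu53 μ a hμ, mu54 μ a hμ, mu56 μ a hμ, mu57 μ a hμ, mu58 μ a hμ, mu60 μ a hμ, mu61 μ a hμ, mu62 μ a hμ, mu63 μ a hμ, mu64 μ a hμ, mu65 μ a hμ, mu67 μ a hμ, mu68 μ a hμ, mu70 μ a hμ, mu71 μ a hμ, mu72 μ a hμ, mu73 μ a hμ, mu74 μ a hμ, mu75 μ a hμ, mu76 μ a hμ, mu78 μ a hμ, mu80 μ a hμ, mu81 μ a hμ, mu82 μ a hμ, mu83 μ a hμ, mu84 μ a hμ, mu85 μ a hμ, mu86 μ a hμ, mu87 μ a hμ, hμ.1 (e 9 0), hμ.1 (e 9 1), hμ.1 (e 9 2), hμ.1 (e 9 3), hμ.1 (e 9 4), hμ.1 (e 9 5), hμ.1 (e 9 6), hμ.1 (e 9 7), hμ.1 (e 9 8),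
    smul_zero, smul_neg, add_zero, zero_add]
  module

private lemma muc0 (μ : Bil 9) (a : ℕ → ℕ → ℂ) (hμ : AdaptedForm 9 μ a) (X Y : V 9) :
    μ X Y 0 = 0 := by
  rw [mu_master μ a hμ]
  simp [e, Pi.single_apply]
  try ring

private lemma muc1 (μ : Bil 9) (a : ℕ → ℕ → ℂ) (hμ : AdaptedForm 9 μ a) (X Y : V 9) :
    μ X Y 1 = 0 := by
  rw [mu_master μ a hμ]
  simp [e, Pi.single_apply]
  try ring

private lemma muc2 (μ : Bil 9) (a : ℕ → ℕ → ℂ) (hμ : AdaptedForm 9 μ a) (X Y : V 9) :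
    μ X Y 2 = X 0 * Y 1 - X 1 * Y 0 := by
  rw [mu_master μ a hμ]
  simp [e, Pi.single_apply]
  try ring

private lemma muc3 (μ : Bil 9) (a : ℕ → ℕ → ℂ) (hμ : AdaptedForm 9 μ a) (X Y : V 9) :
    μ X Y 3 = X 0 * Y 2 - X 2 * Y 0 := by
  rw [mu_master μ a hμ]
  simp [e, Pi.single_apply]
  try ring

private lemma muc4 (μ : Bil 9) (a : ℕ → ℕ → ℂ) (hμ : AdaptedForm 9 μ a) (X Y : V 9) :
    μ X Y 4 = a 1 4 * X 1 * Y 2 - a 1 4 * X 2 * Y 1 + X 0 * Y 3 - X 3 * Y 0 := by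
  rw [mu_master μ a hμ]
  simp [e, Pi.single_apply]
  try ring

private lemma muc5 (μ : Bil 9) (a : ℕ → ℕ → ℂ) (hμ : AdaptedForm 9 μ a) (X Y : V 9) :
    μ X Y 5 = a 1 4 * X 1 * Y 3 - a 1 4 * X 3 * Y 1 + a 1 5 * X 1 * Y 2 - a 1 5 * X 2 * Y 1 + X 0 * Y 4 - X 4 * Y 0 := by
  rw [mu_master μ a hμ]
  simp [e, Pi.single_apply]
  try ring

private lemma muc6 (μ : Bil 9) (a : ℕ → ℕ → ℂ) (hμ : AdaptedForm 9 μ a) (X Y : V 9) :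
    μ X Y 6 = a 1 4 * X 1 * Y 4 - a 1 4 * X 4 * Y 1 + a 1 5 * X 1 * Y 3 - a 1 5 * X 3 * Y 1 + a 1 6 * X 1 * Y 2 - a 1 6 * X 2 * Y 1 - a 2 6 * X 1 * Y 4 + a 2 6 * X 2 * Y 3 - a 2 6 * X 3 * Y 2 + a 2 6 * X 4 * Y 1 + X 0 * Y 5 - X 5 * Y 0 := by
  rw [mu_master μ a hμ]
  simp [e, Pi.single_apply]
  try ring

private lemma muc7 (μ : Bil 9) (a : ℕ → ℕ → ℂ) (hμ : AdaptedForm 9 μ a) (X Y : V 9) :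
    μ X Y 7 = a 1 4 * X 1 * Y 5 - a 1 4 * X 5 * Y 1 + a 1 5 * X 1 * Y 4 - a 1 5 * X 4 * Y 1 + a 1 6 * X 1 * Y 3 - a 1 6 * X 3 * Y 1 + a 1 7 * X 1 * Y 2 - a 1 7 * X 2 * Y 1 - 2 * a 2 6 * X 1 * Y 5 + a 2 6 * X 2 * Y 4 - a 2 6 * X 4 * Y 2 + 2 * a 2 6 * X 5 * Y 1 - a 2 7 * X 1 * Y 4 + a 2 7 * X 2 * Y 3 - a 2 7 * X 3 * Y 2 + a 2 7 * X 4 * Y 1 + X 0 * Y 6 - X 6 * Y 0 := by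
  rw [mu_master μ a hμ]
  simp [e, Pi.single_apply]
  try ring

private lemma muc8 (μ : Bil 9) (a : ℕ → ℕ → ℂ) (hμ : AdaptedForm 9 μ a) (X Y : V 9) :
    μ X Y 8 = a 1 4 * X 1 * Y 6 - a 1 4 * X 6 * Y 1 + a 1 5 * X 1 * Y 5 - a 1 5 * X 5 * Y 1 + a 1 6 * X 1 * Y 4 - a 1 6 * X 4 * Y 1 + a 1 7 * X 1 * Y 3 - a 1 7 * X 3 * Y 1 + a 1 8 * X 1 * Y 2 - a 1 8 * X 2 * Y 1 - 3 * a 2 6 * X 1 * Y 6 + a 2 6 * X 2 * Y 5 - a 2 6 * X 5 * Y 2 + 3 * a 2 6 * X 6 * Y 1 - 2 * a 2 7 * X 1 * Y 5 + a 2 7 * X 2 * Y 4 - a 2 7 * X 4 * Y 2 + 2 * a 2 7 * X 5 * Y 1 - a 2 8 * X 1 * Y 4 + a 2 8 * X 2 * Y 3 - a 2 8 * X 3 * Y 2 + a 2 8 * X 4 * Y 1 + a 3 8 * X 1 * Y 6 - a 3 8 * X 2 * Y 5 + a 3 8 * X 3 * Y 4 - a 3 8 * X 4 * Y 3 + a 3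 8 * X 5 * Y 2 - a 3 8 * X 6 * Y 1 + X 0 * Y 7 - X 7 * Y 0 := by
  rw [mu_master μ a hμ]
  simp [e, Pi.single_apply]
  try ring


/-- for `μ` in the open set `U⁹ ⊆ 𝓕⁹`, the deformation `μ_t = μ + tψ_{1,6}`
is isomorphic to `μ` only if `t = 0`. -/
theorem dim9_nontrivial_deformation (μ : Bil 9) (a : ℕ → ℕ → ℂ)
    (hμ : AdaptedForm 9 μ a)
    (ha14 : a 1 4 ≠ 0) (ha15 : a 1 5 ≠ 0)
    (hU : 3 * a 2 6 * a 1 5 * (a 1 4 - a 2 6) ≠ 2 * a 2 7 * (a 1 4) ^ 2)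
    (hU2 : 2 * a 2 6 - a 1 4 ≠ 0) (ha38 : a 3 8 ≠ 0)
    (φ : Bil 9) (hφalt : IsAlt φ)
    (hφ : ∀ i j, i < j → j ≤ 8 → φ (e 9 i) (e 9 j) = psiCoef 9 1 6 i j)
    (t : ℂ)
    (hiso : ∃ g : V 9 ≃ₗ[ℂ] V 9, ∀ X Y, g ((μ + t • φ) X Y) = μ (g X) (g Y)) :
    t = 0 := by
  obtain ⟨g, hg⟩ := hiso
  have hsum : ∀ X Y : V 9, (μ + t • φ) X Y = μ X Y + t • φ X Y := fun _ _ => rfl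
  have hph01 : φ (e 9 0) (e 9 1) = 0 := by rw [hφ 0 1 (by norm_num) (by norm_num)]; norm_num [psiCoef]
  have hph02 : φ (e 9 0) (e 9 2) = 0 := by rw [hφ 0 2 (by norm_num) (by norm_num)]; norm_num [psiCoef]
  have hph03 : φ (e 9 0) (e 9 3) = 0 := by rw [hφ 0 3 (by norm_num) (by norm_num)]; norm_num [psiCoef]
  have hph04 : φ (e 9 0) (e 9 4) = 0 := by rw [hφ 0 4 (by norm_num) (by norm_num)]; norm_num [psiCoef]
  have hph05 : φ (e 9 0) (e 9 5) = 0 := by rw [hφ 0 5 (by norm_num) (by norm_num)]; norm_num [psiCoef]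
  have hph06 : φ (e 9 0) (e 9 6) = 0 := by rw [hφ 0 6 (by norm_num) (by norm_num)]; norm_num [psiCoef]
  have hph07 : φ (e 9 0) (e 9 7) = 0 := by rw [hφ 0 7 (by norm_num) (by norm_num)]; norm_num [psiCoef]
  have hph12 : φ (e 9 1) (e 9 2) = e 9 6 := by rw [hφ 1 2 (by norm_num) (by norm_num)]; norm_num [psiCoef]
  have hph14 : φ (e 9 1) (e 9 4) = e 9 8 := by rw [hφ 1 4 (by norm_num) (by norm_num)]; norm_num [psiCoef]
  have hph17 : φ (e 9 1) (e 9 7) = 0 := by rw [hφ 1 7 (by norm_num) (by norm_num)]; norm_num [psiCoef]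
  have hph23 : φ (e 9 2) (e 9 3) = 0 := by rw [hφ 2 3 (by norm_num) (by norm_num)]; norm_num [psiCoef]
  have h2 : g (e 9 2) = μ (g (e 9 0)) (g (e 9 1)) := by
    have h := hg (e 9 0) (e 9 1)
    rw [hsum, mu01 μ a hμ, hph01, smul_zero, add_zero] at h
    exact h
  have h3 : g (e 9 3) = μ (g (e 9 0)) (g (e 9 2)) := by
    have h := hg (e 9 0) (e 9 2)
    rw [hsum, mu02 μ a hμ, hph02, smul_zero, add_zero] at h
    exact h
  have h4 : g (e 9 4) = μ (g (e 9 0)) (g (e 9 3)) := by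
    have h := hg (e 9 0) (e 9 3)
    rw [hsum, mu03 μ a hμ, hph03, smul_zero, add_zero] at h
    exact h
  have h5 : g (e 9 5) = μ (g (e 9 0)) (g (e 9 4)) := by
    have h := hg (e 9 0) (e 9 4)
    rw [hsum, mu04 μ a hμ, hph04, smul_zero, add_zero] at h
    exact h
  have h6 : g (e 9 6) = μ (g (e 9 0)) (g (e 9 5)) := by
    have h := hg (e 9 0) (e 9 5)
    rw [hsum, mu05 μ a hμ, hph05, smul_zero, add_zero] at h
    exact h
  have h7 : g (e 9 7) = μ (g (e 9 0)) (g (e 9 6)) := by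
    have h := hg (e 9 0) (e 9 6)
    rw [hsum, mu06 μ a hμ, hph06, smul_zero, add_zero] at h
    exact h
  have h8 : g (e 9 8) = μ (g (e 9 0)) (g (e 9 7)) := by
    have h := hg (e 9 0) (e 9 7)
    rw [hsum, mu07 μ a hμ, hph07, smul_zero, add_zero] at h
    exact h
  have z20 : g (e 9 2) 0 = 0 := by rw [h2, muc0 μ a hμ]
  have z21 : g (e 9 2) 1 = 0 := by rw [h2, muc1 μ a hμ]
  have z30 : g (e 9 3) 0 = 0 := by rw [h3, muc0 μ a hμ]
  have z31 : g (e 9 3) 1 = 0 := by rw [h3, muc1 μ a hμ]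
  have z32 : g (e 9 3) 2 = 0 := by rw [h3, muc2 μ a hμ, z20, z21]; ring
  have z40 : g (e 9 4) 0 = 0 := by rw [h4, muc0 μ a hμ]
  have z41 : g (e 9 4) 1 = 0 := by rw [h4, muc1 μ a hμ]
  have z42 : g (e 9 4) 2 = 0 := by rw [h4, muc2 μ a hμ, z30, z31]; ring
  have z43 : g (e 9 4) 3 = 0 := by rw [h4, muc3 μ a hμ, z30, z32]; ring
  have z50 : g (e 9 5) 0 = 0 := by rw [h5, muc0 μ a hμ]
  have z51 : g (e 9 5) 1 = 0 := by rw [h5, muc1 μ a hμ]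
  have z52 : g (e 9 5) 2 = 0 := by rw [h5, muc2 μ a hμ, z40, z41]; ring
  have z53 : g (e 9 5) 3 = 0 := by rw [h5, muc3 μ a hμ, z40, z42]; ring
  have z54 : g (e 9 5) 4 = 0 := by rw [h5, muc4 μ a hμ, z40, z41, z42, z43]; ring
  have z60 : g (e 9 6) 0 = 0 := by rw [h6, muc0 μ a hμ]
  have z61 : g (e 9 6) 1 = 0 := by rw [h6, muc1 μ a hμ]
  have z62 : g (e 9 6) 2 = 0 := by rw [h6, muc2 μ a hμ, z50, z51]; ring
  have z63 : g (e 9 6) 3 = 0 := by rw [h6, muc3 μ a hμ, z50, z52]; ring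
  have z64 : g (e 9 6) 4 = 0 := by rw [h6, muc4 μ a hμ, z50, z51, z52, z53]; ring
  have z65 : g (e 9 6) 5 = 0 := by rw [h6, muc5 μ a hμ, z50, z51, z52, z53, z54]; ring
  have z70 : g (e 9 7) 0 = 0 := by rw [h7, muc0 μ a hμ]
  have z71 : g (e 9 7) 1 = 0 := by rw [h7, muc1 μ a hμ]
  have z72 : g (e 9 7) 2 = 0 := by rw [h7, muc2 μ a hμ, z60, z61]; ring
  have z73 : g (e 9 7) 3 = 0 := by rw [h7, muc3 μ a hμ, z60, z62]; ring
  have z74 : g (e 9 7) 4 = 0 := by rw [h7, muc4 μ a hμ, z60, z61, z62, z63]; ring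
  have z75 : g (e 9 7) 5 = 0 := by rw [h7, muc5 μ a hμ, z60, z61, z62, z63, z64]; ring
  have z76 : g (e 9 7) 6 = 0 := by rw [h7, muc6 μ a hμ, z60, z61, z62, z63, z64, z65]; ring
  have z80 : g (e 9 8) 0 = 0 := by rw [h8, muc0 μ a hμ]
  have z81 : g (e 9 8) 1 = 0 := by rw [h8, muc1 μ a hμ]
  have z82 : g (e 9 8) 2 = 0 := by rw [h8, muc2 μ a hμ, z70, z71]; ring
  have z83 : g (e 9 8) 3 = 0 := by rw [h8, muc3 μ a hμ, z70, z72]; ring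
  have z84 : g (e 9 8) 4 = 0 := by rw [h8, muc4 μ a hμ, z70, z71, z72, z73]; ring
  have z85 : g (e 9 8) 5 = 0 := by rw [h8, muc5 μ a hμ, z70, z71, z72, z73, z74]; ring
  have z86 : g (e 9 8) 6 = 0 := by rw [h8, muc6 μ a hμ, z70, z71, z72, z73, z74, z75]; ring
  have z87 : g (e 9 8) 7 = 0 := by rw [h8, muc7 μ a hμ, z70, z71, z72, z73, z74, z75, z76]; ring
  have d2 : g (e 9 2) 2 = g (e 9 0) 0 * g (e 9 1) 1 - g (e 9 0) 1 * g (e 9 1) 0 := by rw [h2, muc2 μ a hμ]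
  have d3 : g (e 9 3) 3 = (g (e 9 0)) 0 ^ 1 * ((g (e 9 0)) 0 * (g (e 9 1)) 1 - (g (e 9 0)) 1 * (g (e 9 1)) 0) := by
    rw [h3, muc3 μ a hμ, z20, d2]; ring
  have d4 : g (e 9 4) 4 = (g (e 9 0)) 0 ^ 2 * ((g (e 9 0)) 0 * (g (e 9 1)) 1 - (g (e 9 0)) 1 * (g (e 9 1)) 0) := by
    rw [h4, muc4 μ a hμ, z30, z31, z32, d3]; ring
  have d5 : g (e 9 5) 5 = (g (e 9 0)) 0 ^ 3 * ((g (e 9 0)) 0 * (g (e 9 1)) 1 - (g (e 9 0)) 1 * (g (e 9 1)) 0) := by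
    rw [h5, muc5 μ a hμ, z40, z41, z42, z43, d4]; ring
  have d6 : g (e 9 6) 6 = (g (e 9 0)) 0 ^ 4 * ((g (e 9 0)) 0 * (g (e 9 1)) 1 - (g (e 9 0)) 1 * (g (e 9 1)) 0) := by
    rw [h6, muc6 μ a hμ, z50, z51, z52, z53, z54, d5]; ring
  have d7 : g (e 9 7) 7 = (g (e 9 0)) 0 ^ 5 * ((g (e 9 0)) 0 * (g (e 9 1)) 1 - (g (e 9 0)) 1 * (g (e 9 1)) 0) := by
    rw [h7, muc7 μ a hμ, z60, z61, z62, z63, z64, z65, d6]; ring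
  have d8 : g (e 9 8) 8 = (g (e 9 0)) 0 ^ 6 * ((g (e 9 0)) 0 * (g (e 9 1)) 1 - (g (e 9 0)) 1 * (g (e 9 1)) 0) := by
    rw [h8, muc8 μ a hμ, z70, z71, z72, z73, z74, z75, z76, d7]; ring
  have he8 : e 9 8 ≠ 0 := by
    intro h
    have h8 := congrFun h (⟨8, by norm_num⟩ : Fin 9)
    simp [e, Pi.single_apply] at h8
  have hw8ne : g (e 9 8) ≠ 0 := by
    intro h
    exact he8 (g.injective (by rw [h, map_zero]))
  have hG88 : g (e 9 8) 8 ≠ 0 := by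
    intro h0
    apply hw8ne
    have hx := expand9 (g (e 9 8))
    rw [z80, z81, z82, z83, z84, z85, z86, z87, h0] at hx
    simpa using hx
  have hu0 : (g (e 9 0)) 0 ≠ 0 := by
    intro h
    apply hG88
    rw [d8, h]; ring
  have hK : (g (e 9 0)) 0 * (g (e 9 1)) 1 - (g (e 9 0)) 1 * (g (e 9 1)) 0 ≠ 0 := by
    intro h
    apply hG88
    rw [d8, h]; ring
  have E17 : (0 : V 9) = μ (g (e 9 1)) (g (e 9 7)) := by
    have h := hg (e 9 1) (e 9 7)
    rw [hsum, mu17 μ a hμ, hph17, smul_zero, add_zero, map_zero] at h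
    exact h
  have E178 := congrFun E17 (8 : Fin 9)
  rw [show (0 : V 9) 8 = 0 from rfl, muc8 μ a hμ, z70, z71, z72, z73, z74, z75, z76, d7] at E178
  have hprod : (g (e 9 1)) 0 * ((g (e 9 0)) 0 ^ 5 * ((g (e 9 0)) 0 * (g (e 9 1)) 1 - (g (e 9 0)) 1 * (g (e 9 1)) 0)) = 0 := by
    linear_combination -E178
  have hq0 : (g (e 9 1)) 0 = 0 := by
    rcases mul_eq_zero.mp hprod with h | h
    · exact h
    · exact absurd h (mul_ne_zero (pow_ne_zero 5 hu0) hK)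
  have hv1 : (g (e 9 1)) 1 ≠ 0 := by
    intro h
    apply hK; rw [hq0, h]; ring
  have c22 : g (e 9 2) 2 = (g (e 9 0)) 0 * (g (e 9 1)) 1 := by rw [d2, hq0]; ring
  have c23 : g (e 9 2) 3 = (g (e 9 0)) 0 * (g (e 9 1)) 2 := by rw [h2, muc3 μ a hμ, hq0]; ring
  have c33 : g (e 9 3) 3 = (g (e 9 0)) 0 ^ 2 * (g (e 9 1)) 1 := by rw [d3, hq0]; ring
  have c34 : g (e 9 3) 4 = a 1 4 * (g (e 9 0)) 0 * (g (e 9 0)) 1 * (g (e 9 1)) 1 + (g (e 9 0)) 0 ^ 2 * (g (e 9 1)) 2 := by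
    rw [h3, muc4 μ a hμ, z20, z21, c22, c23]; ring
  have c44 : g (e 9 4) 4 = (g (e 9 0)) 0 ^ 3 * (g (e 9 1)) 1 := by rw [d4, hq0]; ring
  have c45 : g (e 9 4) 5 = 2 * a 1 4 * (g (e 9 0)) 0 ^ 2 * (g (e 9 0)) 1 * (g (e 9 1)) 1 + (g (e 9 0)) 0 ^ 3 * (g (e 9 1)) 2 := by
    rw [h4, muc5 μ a hμ, z30, z31, z32, c33, c34]; ring
  have c55 : g (e 9 5) 5 = (g (e 9 0)) 0 ^ 4 * (g (e 9 1)) 1 := by rw [d5, hq0]; ring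
  have c56 : g (e 9 5) 6 = (3 * a 1 4 - a 2 6) * (g (e 9 0)) 0 ^ 3 * (g (e 9 0)) 1 * (g (e 9 1)) 1 + (g (e 9 0)) 0 ^ 4 * (g (e 9 1)) 2 := by
    rw [h5, muc6 μ a hμ, z40, z41, z42, z43, c44, c45]; ring
  have c66 : g (e 9 6) 6 = (g (e 9 0)) 0 ^ 5 * (g (e 9 1)) 1 := by rw [d6, hq0]; ring
  have c67 : g (e 9 6) 7 = (4 * a 1 4 - 3 * a 2 6) * (g (e 9 0)) 0 ^ 4 * (g (e 9 0)) 1 * (g (e 9 1)) 1 + (g (e 9 0)) 0 ^ 5 * (g (e 9 1)) 2 := by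
    rw [h6, muc7 μ a hμ, z50, z51, z52, z53, z54, c55, c56]; ring
  have c77 : g (e 9 7) 7 = (g (e 9 0)) 0 ^ 6 * (g (e 9 1)) 1 := by rw [d7, hq0]; ring
  have E12 : a 1 4 • g (e 9 4) + a 1 5 • g (e 9 5) + a 1 6 • g (e 9 6) + a 1 7 • g (e 9 7)
      + a 1 8 • g (e 9 8) + t • g (e 9 6) = μ (g (e 9 1)) (g (e 9 2)) := by
    have h := hg (e 9 1) (e 9 2)
    rw [hsum, mu12 μ a hμ, hph12] at h
    rw [← h]
    simp only [map_add, map_smul]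
  have E124 := congrFun E12 (4 : Fin 9)
  simp only [Pi.add_apply, Pi.smul_apply, smul_eq_mul] at E124
  rw [muc4 μ a hμ, z54, z64, z74, z84, c44, c22, z21, z20, hq0] at E124
  have hprod2 : a 1 4 * (g (e 9 0)) 0 * (g (e 9 1)) 1 * ((g (e 9 0)) 0 ^ 2 - (g (e 9 1)) 1) = 0 := by
    linear_combination E124
  have hbeta : (g (e 9 1)) 1 = (g (e 9 0)) 0 ^ 2 := by
    rcases mul_eq_zero.mp hprod2 with h | h
    · exact absurd h (mul_ne_zero (mul_ne_zero ha14 hu0) hv1)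
    · exact (sub_eq_zero.mp h).symm
  have E125 := congrFun E12 (5 : Fin 9)
  simp only [Pi.add_apply, Pi.smul_apply, smul_eq_mul] at E125
  rw [muc5 μ a hμ, z65, z75, z85, c45, c55, c22, c23, z21, z20, hq0, hbeta] at E125
  have hb : (g (e 9 0)) 0 ^ 4 * (2 * a 1 4 ^ 2 * (g (e 9 0)) 1 + a 1 5 * (g (e 9 0)) 0 ^ 2 - a 1 5 * (g (e 9 0)) 0) = 0 := by
    linear_combination E125
  have hb' : 2 * a 1 4 ^ 2 * (g (e 9 0)) 1 + a 1 5 * (g (e 9 0)) 0 ^ 2 - a 1 5 * (g (e 9 0)) 0 = 0 := by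
    rcases mul_eq_zero.mp hb with h | h
    · exact absurd h (pow_ne_zero 4 hu0)
    · exact h
  have E23 : a 2 6 • g (e 9 6) + a 2 7 • g (e 9 7) + a 2 8 • g (e 9 8)
      = μ (g (e 9 2)) (g (e 9 3)) := by
    have h := hg (e 9 2) (e 9 3)
    rw [hsum, mu23 μ a hμ, hph23, smul_zero, add_zero] at h
    rw [← h]
    simp only [map_add, map_smul]
  have E237 := congrFun E23 (7 : Fin 9)
  simp only [Pi.add_apply, Pi.smul_apply, smul_eq_mul] at E237
  rw [muc7 μ a hμ, z87, c67, c77, c22, c33, c34, z20, z21, z30, z31, z32, hbeta] at E237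
  have hb2 : (g (e 9 0)) 0 ^ 6 * (3 * a 2 6 * (a 1 4 - a 2 6) * (g (e 9 0)) 1 + a 2 7 * (g (e 9 0)) 0 ^ 2 - a 2 7 * (g (e 9 0)) 0) = 0 := by
    linear_combination E237
  have hb2' : 3 * a 2 6 * (a 1 4 - a 2 6) * (g (e 9 0)) 1 + a 2 7 * (g (e 9 0)) 0 ^ 2 - a 2 7 * (g (e 9 0)) 0 = 0 := by
    rcases mul_eq_zero.mp hb2 with h | h
    · exact absurd h (pow_ne_zero 6 hu0)
    · exact h
  have key : ((g (e 9 0)) 0 ^ 2 - (g (e 9 0)) 0) * (3 * a 2 6 * a 1 5 * (a 1 4 - a 2 6) - 2 * a 2 7 * (a 1 4) ^ 2) = 0 := by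
    linear_combination (3 * a 2 6 * (a 1 4 - a 2 6)) * hb' - (2 * a 1 4 ^ 2) * hb2'
  have key2 : (g (e 9 0)) 0 ^ 2 - (g (e 9 0)) 0 = 0 := by
    rcases mul_eq_zero.mp key with h | h
    · exact h
    · exact absurd (sub_eq_zero.mp h) hU
  have halpha : (g (e 9 0)) 0 = 1 := by
    have h := mul_eq_zero.mp (show (g (e 9 0)) 0 * ((g (e 9 0)) 0 - 1) = 0 by linear_combination key2)
    rcases h with h | h
    · exact absurd h hu0
    · linear_combination h
  have hbeta1 : (g (e 9 1)) 1 = 1 := by rw [hbeta, halpha]; ring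
  have hu1 : (g (e 9 0)) 1 = 0 := by
    have h : 2 * a 1 4 ^ 2 * (g (e 9 0)) 1 = 0 := by
      rw [halpha] at hb'
      linear_combination hb'
    rcases mul_eq_zero.mp h with h' | h'
    · exact absurd h' (mul_ne_zero two_ne_zero (pow_ne_zero 2 ha14))
    · exact h'
  have s22 : g (e 9 2) 2 = 1 := by rw [c22, halpha, hbeta1]; ring
  have s23 : g (e 9 2) 3 = (g (e 9 1)) 2 := by rw [c23, halpha]; ring
  have s24 : g (e 9 2) 4 = (g (e 9 1)) 3 - a 1 4 * (g (e 9 0)) 2 := by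
    rw [h2, muc4 μ a hμ, hq0, halpha, hbeta1, hu1]; ring
  have s33 : g (e 9 3) 3 = 1 := by rw [c33, halpha, hbeta1]; ring
  have s34 : g (e 9 3) 4 = (g (e 9 1)) 2 := by rw [c34, halpha, hbeta1, hu1]; ring
  have s35 : g (e 9 3) 5 = (g (e 9 1)) 3 - a 1 4 * (g (e 9 0)) 2 := by
    rw [h3, muc5 μ a hμ, z20, z21, hu1, halpha, s24]; ring
  have s44 : g (e 9 4) 4 = 1 := by rw [c44, halpha, hbeta1]; ring
  have s45 : g (e 9 4) 5 = (g (e 9 1)) 2 := by rw [c45, halpha, hbeta1, hu1]; ring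
  have s46 : g (e 9 4) 6 = (g (e 9 1)) 3 + a 2 6 * (g (e 9 0)) 2 - a 1 4 * (g (e 9 0)) 2 := by
    rw [h4, muc6 μ a hμ, z30, z31, z32, hu1, halpha, s33, s34, s35]; ring
  have s55 : g (e 9 5) 5 = 1 := by rw [c55, halpha, hbeta1]; ring
  have s56 : g (e 9 5) 6 = (g (e 9 1)) 2 := by rw [c56, halpha, hbeta1, hu1]; ring
  have s57 : g (e 9 5) 7 = (g (e 9 1)) 3 + 2 * a 2 6 * (g (e 9 0)) 2 - a 1 4 * (g (e 9 0)) 2 := by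
    rw [h5, muc7 μ a hμ, z40, z41, z42, z43, hu1, halpha, s44, s45, s46]; ring
  have s66 : g (e 9 6) 6 = 1 := by rw [c66, halpha, hbeta1]; ring
  have s68 : g (e 9 6) 8 = (g (e 9 1)) 3 + 3 * a 2 6 * (g (e 9 0)) 2 - a 3 8 * (g (e 9 0)) 2 - a 1 4 * (g (e 9 0)) 2 := by
    rw [h6, muc8 μ a hμ, z50, z51, z52, z53, z54, hu1, halpha, s55, s56, s57]; ring
  have s67 : g (e 9 6) 7 = (g (e 9 1)) 2 := by rw [c67, halpha, hbeta1, hu1]; ring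
  have s77 : g (e 9 7) 7 = 1 := by rw [c77, halpha, hbeta1]; ring
  have s78 : g (e 9 7) 8 = (g (e 9 1)) 2 := by
    rw [h7, muc8 μ a hμ, z60, z61, z62, z63, z64, z65, hu1, halpha, s66, s67]; ring
  have s88 : g (e 9 8) 8 = 1 := by rw [d8, hq0, halpha, hbeta1]; ring
  have E126 := congrFun E12 (6 : Fin 9)
  simp only [Pi.add_apply, Pi.smul_apply, smul_eq_mul] at E126
  rw [muc6 μ a hμ, z76, z86, s46, s56, s66, s22, s23, s24, z21, z20, hq0, hbeta1] at E126
  have ht1 : t = a 2 6 * (g (e 9 1)) 2 ^ 2 - 2 * a 2 6 * (g (e 9 1)) 3 := by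
    linear_combination E126
  have E14 : (a 1 4 - a 2 6) • g (e 9 6) + (a 1 5 - a 2 7) • g (e 9 7) + (a 1 6 - a 2 8) • g (e 9 8)
      + t • g (e 9 8) = μ (g (e 9 1)) (g (e 9 4)) := by
    have h := hg (e 9 1) (e 9 4)
    rw [hsum, mu14 μ a hμ, hph14] at h
    rw [← h]
    simp only [map_add, map_smul]
  have E148 := congrFun E14 (8 : Fin 9)
  simp only [Pi.add_apply, Pi.smul_apply, smul_eq_mul] at E148
  rw [muc8 μ a hμ, s68, s78, s88, z40, z41, z42, z43, s44, s45, s46, hq0, hbeta1] at E148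
  have ht2 : t = (a 2 6 - a 3 8) * ((g (e 9 1)) 2 ^ 2 - 2 * (g (e 9 1)) 3) := by
    linear_combination E148
  have hz : a 3 8 * ((g (e 9 1)) 2 ^ 2 - 2 * (g (e 9 1)) 3) = 0 := by
    linear_combination ht2 - ht1
  have hfin : (g (e 9 1)) 2 ^ 2 - 2 * (g (e 9 1)) 3 = 0 := by
    rcases mul_eq_zero.mp hz with h | h
    · exact absurd h ha38
    · exact h
  linear_combination ht1 + a 2 6 * hfin
end
end
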